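/- arXiv:math/0211420 — 10 statements merged into one kernel-verified Lean document; each statement's English description precedes it below -/
import Mathlib

section
/- Let (A,F) be a finite algebra with |A| ≥ 2 that has almost minimal spectrum. Then {(A,F)} is a direct factor set: for every n ≥ 1, every irreducible F-invariant subdirect product B ⊆ A^n is equal to A^n. -/
/-- An `n`-ary operation on `A`. -/
abbrev Op (A : Type*) (n : ℕ) : Type _ := (Fin n → A) → A

/-- A family of sets of finitary operations is a clone if it contains all projections
and is closed under composition. -/
def IsClone {A : Type*} (C : ∀ n, Set (Op A n)) : Prop :=
  (∀ (n : ℕ) (i : Fin n), (fun v : Fin n → A => v i) ∈ C n) ∧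
  (∀ (n k : ℕ) (f : Op A n) (g : Fin n → Op A k),
    f ∈ C n → (∀ i, g i ∈ C k) → (fun v : Fin k → A => f (fun i => g i v)) ∈ C k)

/-- A clone is maximal if it is proper and any clone containing it is itself or everything. -/
def IsMaximalClone {A : Type*} (C : ∀ n, Set (Op A n)) : Prop :=
  IsClone C ∧ C ≠ (fun _ => Set.univ) ∧
  ∀ D : ∀ n, Set (Op A n), IsClone D → (∀ n, C n ⊆ D n) →
    D = C ∨ D = (fun _ => Set.univ)

/-- An `n`-ary operation preserves an `h`-ary relation `ρ`. -/
def Preserves {A : Type*} {n h : ℕ} (f : Op A n) (ρ : Set (Fin h → A)) : Prop :=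
  ∀ r : Fin n → Fin h → A, (∀ i, r i ∈ ρ) → (fun j : Fin h => f (fun i => r i j)) ∈ ρ

/-- The polymorphism clone of a relation. -/
def Pol {A : Type*} {h : ℕ} (ρ : Set (Fin h → A)) : ∀ n, Set (Op A n) :=
  fun n => {f | Preserves f ρ}

/-- If a finite algebra `(A, F)` with `|A| ≥ 2` has almost minimal spectrum, then `{(A, F)}`
is a direct factor set: every irreducible `F`-invariant subdirect product `B ⊆ A^n`
equals `A^n`. -/
theorem direct_factor_set {A : Type*} [Fintype A]
    (hA : 2 ≤ Fintype.card A) (F : ∀ n, Set (Op A n))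
    (hspec : ∀ m : ℕ, 1 ≤ m → ∀ B : Set (Fin m → A), B.Nonempty →
      (∀ n, ∀ f ∈ F n, Preserves f B) →
      ∃ k : ℕ, Nat.card B = Fintype.card A ^ k) :
    ∀ n : ℕ, 1 ≤ n → ∀ B : Set (Fin n → A),
      (∀ m, ∀ f ∈ F m, Preserves f B) →
      (∀ (i : Fin n) (a : A), ∃ b ∈ B, b i = a) →
      (∀ E : Set (Fin n), E ≠ Set.univ →
        ∃ b ∈ B, ∃ b' ∈ B, b ≠ b' ∧ ∀ i ∈ E, b i = b' i) →
      B = Set.univ := by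
  intro n hn B hinv hsub hirr
  classical
  have hApos : 0 < Fintype.card A := by omega
  have hAne : Nonempty A := Fintype.card_pos_iff.mp hApos
  obtain ⟨a0⟩ := hAne
  obtain ⟨b0, hb0, -⟩ := hsub ⟨0, hn⟩ a0
  -- projections are nonempty and invariant
  have hproj : ∀ (j : ℕ) (hj : j ≤ n),
      ((fun b : Fin n → A => b ∘ Fin.castLE hj) '' B).Nonempty ∧
      (∀ m, ∀ f ∈ F m, Preserves f ((fun b : Fin n → A => b ∘ Fin.castLE hj) '' B)) := by
    intro j hj
    refine ⟨⟨_, b0, hb0, rfl⟩, ?_⟩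
    intro m f hf r hr
    choose c hc hc2 using hr
    refine ⟨fun s => f (fun i => c i s), hinv m f hf c hc, ?_⟩
    funext t
    simp only [Function.comp]
    congr 1
    funext i
    exact congrFun (hc2 i) t
  have key : ∀ j, 1 ≤ j → ∀ hj : j ≤ n,
      Fintype.card A ^ j ≤ Nat.card ((fun b : Fin n → A => b ∘ Fin.castLE hj) '' B) := by
    intro j
    induction j with
    | zero => omega
    | succ j ih =>
      intro _ hj1
      set S := (fun b : Fin n → A => b ∘ Fin.castLE hj1) '' B with hS
      by_cases hj0 : j = 0
      · -- base case j + 1 = 1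
        subst hj0
        have e : ↥S → A := fun x => x.1 0
        have hesurj : Function.Surjective (fun x : ↥S => x.1 0) := by
          intro a
          obtain ⟨b, hb, hba⟩ := hsub (Fin.castLE hj1 0) a
          exact ⟨⟨b ∘ Fin.castLE hj1, b, hb, rfl⟩, hba⟩
        have := Nat.card_le_card_of_surjective _ hesurj
        simpa [Nat.card_eq_fintype_card] using this
      · -- inductive step
        have hj : j ≤ n := by omega
        have ihj := ih (by omega) hj
        set T := (fun b : Fin n → A => b ∘ Fin.castLE hj) '' B with hT
        have hjj1 : j ≤ j + 1 := Nat.le_succ j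
        -- the drop map
        have hmem : ∀ x : ↥S, x.1 ∘ Fin.castLE hjj1 ∈ T := by
          rintro ⟨x, b, hb, rfl⟩
          exact ⟨b, hb, rfl⟩
        set φ : ↥S → ↥T := fun x => ⟨x.1 ∘ Fin.castLE hjj1, hmem x⟩ with hφ
        have hφsurj : Function.Surjective φ := by
          rintro ⟨y, b, hb, rfl⟩
          exact ⟨⟨b ∘ Fin.castLE hj1, b, hb, rfl⟩, rfl⟩
        have hφninj : ¬ Function.Injective φ := by
          intro hinj
          have hjn : j < n := by omega
          obtain ⟨b, hb, b', hb', hbb', hagree⟩ :=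
            hirr {i : Fin n | (i : ℕ) ≠ j} (by
              intro hE
              have : (⟨j, hjn⟩ : Fin n) ∈ {i : Fin n | (i : ℕ) ≠ j} :=
                hE ▸ Set.mem_univ _
              exact this rfl)
          have hdiff : b ⟨j, hjn⟩ ≠ b' ⟨j, hjn⟩ := by
            intro heq
            apply hbb'
            funext i
            by_cases hij : (i : ℕ) = j
            · have : i = ⟨j, hjn⟩ := Fin.ext hij
              rw [this]; exact heq
            · exact hagree i hij
          have hx : b ∘ Fin.castLE hj1 ∈ S := ⟨b, hb, rfl⟩
          have hy : b' ∘ Fin.castLE hj1 ∈ S := ⟨b', hb', rfl⟩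
          have hφeq : φ ⟨_, hx⟩ = φ ⟨_, hy⟩ := by
            apply Subtype.ext
            funext t
            simp only [hφ, Function.comp]
            refine hagree _ ?_
            have ht := t.2
            show ((Fin.castLE hj1 (Fin.castLE hjj1 t)) : ℕ) ≠ j
            simp only [Fin.coe_castLE]
            omega
          have := congrArg (fun z => z.1 ⟨j, Nat.lt_succ_self j⟩) (hinj hφeq)
          exact hdiff this
        -- strict cardinality increase
        have hle : Nat.card ↥T ≤ Nat.card ↥S := Nat.card_le_card_of_surjective φ hφsurj
        have hlt : Nat.card ↥T < Nat.card ↥S := by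
          rcases lt_or_eq_of_le hle with h | h
          · exact h
          · exact absurd ((Nat.bijective_iff_surjective_and_card φ).mpr ⟨hφsurj, h.symm⟩).1
              hφninj
        obtain ⟨hTne, hTinv⟩ := hproj j hj
        obtain ⟨hSne, hSinv⟩ := hproj (j + 1) hj1
        obtain ⟨kT, hkT⟩ := hspec j (by omega) T hTne hTinv
        obtain ⟨kS, hkS⟩ := hspec (j + 1) (by omega) S hSne hSinv
        rw [hkT, hkS] at hlt
        have hkTj : j ≤ kT := by
          rw [hkT] at ihj
          exact (Nat.pow_le_pow_iff_right hA).mp ihj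
        have : kT < kS := (Nat.pow_lt_pow_iff_right (by omega)).mp hlt
        rw [hkS]
        exact Nat.pow_le_pow_right hApos (by omega)
  have hkey := key n hn le_rfl
  have himg : (fun b : Fin n → A => b ∘ Fin.castLE le_rfl) '' B = B := by
    rw [Fin.castLE_rfl]
    simp
  rw [himg, Nat.card_coe_set_eq] at hkey
  refine Set.eq_of_subset_of_ncard_le (Set.subset_univ B) ?_ (Set.finite_univ)
  rw [Set.ncard_univ, Nat.card_eq_fintype_card]
  simpa using hkey
end

section
/- Let A be a finite set with |A| ≥ 2 and let ρ ⊆ A × A be a partial order on A with a least and a greatest element. Then Pol(ρ) is a maximal clone on A. -/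
/-- The pair `(a, b)` as a binary tuple. -/
def pair {A : Type*} (a b : A) : Fin 2 → A := ![a, b]

/-- A bounded partial order: a partial order with a least and a greatest element. -/
def IsBoundedPartialOrder {A : Type*} (ρ : Set (Fin 2 → A)) : Prop :=
  (∀ a : A, pair a a ∈ ρ) ∧
  (∀ a b : A, pair a b ∈ ρ → pair b a ∈ ρ → a = b) ∧
  (∀ a b c : A, pair a b ∈ ρ → pair b c ∈ ρ → pair a c ∈ ρ) ∧
  (∃ z : A, ∀ a : A, pair z a ∈ ρ) ∧
  (∃ o : A, ∀ a : A, pair a o ∈ ρ)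

theorem monotone_ite {α β : Type*} [Preorder α] [Preorder β] {P : α → Prop} [DecidablePred P]
    (hP : IsUpperSet {a | P a}) {x y : β} (hxy : x ≤ y) :
    Monotone fun a => if P a then y else x := by
  intro a b hab
  dsimp only
  split_ifs with ha hb hb
  · exact le_rfl
  · exact absurd (hP hab ha) hb
  · exact hxy
  · exact le_rfl

section SoleValue

variable {A ι : Type*} [PartialOrder A] [BoundedOrder A]

open Classical in
noncomputable def soleValue (y : ι → A) : A :=
  if h : ∃ s, ∀ t ≠ s, y t = ⊥ then y h.choose else ⊤

theorem soleValue_eq {y : ι → A} {s : ι} (hy : ∀ t ≠ s, y t = ⊥) : soleValue y = y s := by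
  have hex : ∃ s, ∀ t ≠ s, y t = ⊥ := ⟨s, hy⟩
  rw [soleValue, dif_pos hex]
  by_cases hs : hex.choose = s
  · rw [hs]
  · rw [hy _ hs, hex.choose_spec s (Ne.symm hs)]

theorem monotone_soleValue : Monotone (soleValue : (ι → A) → A) := by
  intro y y' hyy'
  by_cases hex : ∃ s, ∀ t ≠ s, y' t = ⊥
  · obtain ⟨s, hs⟩ := hex
    have hy : ∀ t ≠ s, y t = ⊥ := fun t ht => le_bot_iff.1 (hs t ht ▸ hyy' t)
    rw [soleValue_eq hy, soleValue_eq hs]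
    exact hyy' s
  · have htop : soleValue y' = ⊤ := dif_neg hex
    exact htop ▸ le_top

end SoleValue

section Clone

variable {A : Type*} {D : ∀ n, Set (Op A n)}

theorem isClone_pol {h : ℕ} (ρ : Set (Fin h → A)) : IsClone (Pol ρ) :=
  ⟨fun _ i _ hr => hr i, fun _ _ _ _ hf hg r hr => hf _ fun i => hg i r hr⟩

theorem mem_pol_setOf_le_iff [Preorder A] {n : ℕ} {F : Op A n} :
    F ∈ Pol {v : Fin 2 → A | v 0 ≤ v 1} n ↔ Monotone F :=
  ⟨fun hF v w hvw => hF (fun i => ![v i, w i]) hvw, fun hF r hr => hF hr⟩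

theorem IsClone.comp_unary_mem (hD : IsClone D) {u : A → A}
    (hu : (fun v : Fin 1 → A => u (v 0)) ∈ D 1) {k : ℕ} {g : Op A k} (hg : g ∈ D k) :
    (fun v => u (g v)) ∈ D k :=
  hD.2 1 k _ (fun _ => g) hu fun _ => hg

theorem IsClone.comp_binary_mem (hD : IsClone D) {c : A → A → A}
    (hc : (fun v : Fin 2 → A => c (v 0) (v 1)) ∈ D 2) {k : ℕ} {g₁ g₂ : Op A k}
    (hg₁ : g₁ ∈ D k) (hg₂ : g₂ ∈ D k) : (fun v => c (g₁ v) (g₂ v)) ∈ D k :=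
  hD.2 2 k _ ![g₁, g₂] hc (Fin.forall_fin_two.2 ⟨hg₁, hg₂⟩)

end Clone

section MonotoneClone

variable {A : Type*} [PartialOrder A] [BoundedOrder A] {D : ∀ n, Set (Op A n)}

theorem exists_swap_mem_of_not_monotone [Nontrivial A] (hD : IsClone D)
    (hmono : ∀ {n} {F : Op A n}, Monotone F → F ∈ D n) {n : ℕ} {f : Op A n} (hf : f ∈ D n)
    (hnm : ¬ Monotone f) :
    ∃ u : A → A, (fun v : Fin 1 → A => u (v 0)) ∈ D 1 ∧ u ⊥ = ⊤ ∧ u ⊤ = ⊥ := by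
  classical
  obtain ⟨r₀, r₁, hr, hfr⟩ : ∃ r₀ r₁, r₀ ≤ r₁ ∧ ¬ f r₀ ≤ f r₁ := by
    simpa only [Monotone, not_forall, exists_prop] using hnm
  have hg : (fun v : Fin 1 → A => f fun i => if ⊤ ≤ v 0 then r₁ i else r₀ i) ∈ D 1 :=
    hD.2 n 1 f (fun i v => if ⊤ ≤ v 0 then r₁ i else r₀ i) hf fun i =>
      hmono ((monotone_ite (isUpperSet_Ici ⊤) (hr i)).comp (Function.monotone_eval 0))
  have hφ : (fun v : Fin 1 → A => if f r₀ ≤ v 0 then ⊤ else ⊥) ∈ D 1 :=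
    hmono ((monotone_ite (isUpperSet_Ici (f r₀)) bot_le).comp (Function.monotone_eval 0))
  refine ⟨fun a => if f r₀ ≤ f fun i => if ⊤ ≤ a then r₁ i else r₀ i then ⊤ else ⊥,
    hD.comp_unary_mem (u := fun a => if f r₀ ≤ a then ⊤ else ⊥) hφ hg, ?_, ?_⟩
  · simp
  · simp [hfr]

theorem ite_eq_mem_of_swap [Nontrivial A] [DecidableEq A] (hD : IsClone D)
    (hmono : ∀ {n} {F : Op A n}, Monotone F → F ∈ D n) {u : A → A}
    (hu : (fun v : Fin 1 → A => u (v 0)) ∈ D 1) (hu_bot : u ⊥ = ⊤) (hu_top : u ⊤ = ⊥)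
    {m : ℕ} (a : Fin m → A) (b : A) : (fun x => if x = a then b else ⊥) ∈ D m := by
  classical
  have hge : (fun x => if a ≤ x then ⊤ else ⊥) ∈ D m :=
    hmono (monotone_ite (isUpperSet_Ici a) bot_le)
  have hle : (fun x => u (if ¬ x ≤ a then ⊤ else ⊥)) ∈ D m :=
    hD.comp_unary_mem hu (hmono (monotone_ite (isLowerSet_Iic a).compl bot_le))
  have hand : (fun v : Fin 2 → A => if ⊤ ≤ v 0 ∧ ⊤ ≤ v 1 then b else ⊥) ∈ D 2 :=
    hmono <| monotone_ite (fun _ _ hvw h => And.intro (h.1.trans (hvw 0)) (h.2.trans (hvw 1)))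
      bot_le
  convert hD.comp_binary_mem (c := fun s t => if ⊤ ≤ s ∧ ⊤ ≤ t then b else ⊥)
    hand hge hle using 1
  funext x
  refine if_congr ?_ rfl rfl
  rw [le_antisymm_iff]
  by_cases h₁ : a ≤ x <;> by_cases h₂ : x ≤ a <;> simp [h₁, h₂, hu_bot, hu_top]

theorem mem_of_swap [Fintype A] [Nontrivial A] (hD : IsClone D)
    (hmono : ∀ {n} {F : Op A n}, Monotone F → F ∈ D n) {u : A → A}
    (hu : (fun v : Fin 1 → A => u (v 0)) ∈ D 1) (hu_bot : u ⊥ = ⊤) (hu_top : u ⊤ = ⊥)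
    {m : ℕ} (F : Op A m) : F ∈ D m := by
  classical
  let e := (Fintype.equivFin (Fin m → A)).symm
  convert hD.2 _ m soleValue (fun s x => if x = e s then F (e s) else ⊥)
    (hmono monotone_soleValue) (fun s => ite_eq_mem_of_swap hD hmono hu hu_bot hu_top _ _) using 1
  funext x
  rw [soleValue_eq (s := e.symm x)]
  · simp
  · intro t ht
    exact if_neg fun hx => ht (e.eq_symm_apply.2 hx.symm)

theorem isMaximalClone_pol_le [Fintype A] [Nontrivial A] :
    IsMaximalClone (Pol {v : Fin 2 → A | v 0 ≤ v 1}) := by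
  classical
  refine ⟨isClone_pol _, fun h => ?_, fun D hD hsub => ?_⟩
  · have hneg : (fun v : Fin 1 → A => if v 0 = ⊥ then ⊤ else ⊥) ∈
        Pol {v : Fin 2 → A | v 0 ≤ v 1} 1 := h ▸ Set.mem_univ _
    simpa using mem_pol_setOf_le_iff.1 hneg (bot_le : ⊥ ≤ (⊤ : Fin 1 → A))
  have hmono : ∀ {n} {F : Op A n}, Monotone F → F ∈ D n :=
    fun hF => hsub _ (mem_pol_setOf_le_iff.2 hF)
  by_cases hD_mono : ∀ n, ∀ f ∈ D n, Monotone f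
  · exact Or.inl <| funext fun n =>
      Set.Subset.antisymm (fun f hf => mem_pol_setOf_le_iff.2 (hD_mono n f hf)) (hsub n)
  · push Not at hD_mono
    obtain ⟨n, f, hf, hnm⟩ := hD_mono
    obtain ⟨u, hu, hu_bot, hu_top⟩ := exists_swap_mem_of_not_monotone hD hmono hf hnm
    exact Or.inr <| funext fun _ => Set.eq_univ_of_forall (mem_of_swap hD hmono hu hu_bot hu_top)

end MonotoneClone

/-- `Pol` of a bounded partial order on a finite set with at least two elements
is a maximal clone. -/
theorem bounded_partial_order_maximal {A : Type*} [Fintype A]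
    (hA : 2 ≤ Fintype.card A) (ρ : Set (Fin 2 → A))
    (hρ : IsBoundedPartialOrder ρ) : IsMaximalClone (Pol ρ) := by
  obtain ⟨hrefl, hanti, htrans, ⟨z, hz⟩, ⟨o, ho⟩⟩ := hρ
  let : PartialOrder A :=
    { le := fun a b => pair a b ∈ ρ, le_refl := hrefl, le_trans := htrans, le_antisymm := hanti }
  let : BoundedOrder A := { top := o, le_top := ho, bot := z, bot_le := hz }
  have : Nontrivial A := Fintype.one_lt_card_iff_nontrivial.1 hA
  have hρ : {v : Fin 2 → A | v 0 ≤ v 1} = ρ := Set.ext fun v => by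
    change pair (v 0) (v 1) ∈ ρ ↔ v ∈ ρ
    rw [show pair (v 0) (v 1) = v from funext fun i => by fin_cases i <;> rfl]
  simpa only [hρ] using isMaximalClone_pol_le (A := A)
end

section
/- Let A be a finite set with |A| ≥ 2 and let ρ ⊆ A be a nonempty proper subset of A (a unary central relation). Then Pol(ρ) is a maximal clone on A. -/
/-- `Pol` of a nonempty proper subset of `A` (a unary central relation) is a maximal clone. -/
theorem unary_central_maximal {A : Type*} [Fintype A]
    (hA : 2 ≤ Fintype.card A) (ρ : Set A) (hne : ρ.Nonempty)
    (hproper : ρ ≠ Set.univ) :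
    IsMaximalClone (Pol {v : Fin 1 → A | v 0 ∈ ρ}) := by
  classical
  obtain ⟨a, ha⟩ := hne
  obtain ⟨b, hb⟩ : ∃ b, b ∉ ρ := by
    by_contra h
    push_neg at h
    exact hproper (Set.eq_univ_of_forall h)
  set σ : Set (Fin 1 → A) := {v : Fin 1 → A | v 0 ∈ ρ} with hσ
  -- constants at values in ρ are polymorphisms
  have hconst : ∀ (m : ℕ) (c : A), c ∈ ρ → (fun _ : Fin m → A => c) ∈ Pol σ m := by
    intro m c hc r _hr
    simpa [σ, Preserves] using hc
  have hclone : IsClone (Pol σ) := by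
    constructor
    · intro n i r hr
      exact hr i
    · intro n k f g hf hg r hr
      exact hf (fun i => fun j => g i (fun l => r l j)) (fun i => hg i r hr)
  refine ⟨hclone, ?_, ?_⟩
  · intro h
    have : (fun _ : Fin 1 → A => b) ∈ Pol σ 1 := by
      rw [h]; trivial
    have := this (fun _ _ => a) (fun _ => ha)
    exact hb this
  · intro D hD hsub
    by_cases hDC : ∀ n, D n ⊆ Pol σ n
    · left
      funext n
      exact le_antisymm (hDC n) (hsub n)
    · right
      push_neg at hDC
      obtain ⟨n, hn⟩ := hDC
      obtain ⟨g, hgD, hgP⟩ := Set.not_subset.mp hn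
      -- g fails to preserve: get inputs in ρ with output out of ρ
      simp only [Pol, Preserves, Set.mem_setOf_eq, not_forall] at hgP
      obtain ⟨r, hr, hout⟩ := hgP
      set b' : A := g (fun i => r i 0) with hb'
      have hb'ρ : b' ∉ ρ := by
        intro h
        exact hout (by simpa [σ] using h)
      -- constant b' (arity m) is in D
      have hconstD : ∀ m : ℕ, (fun _ : Fin m → A => b') ∈ D m := by
        intro m
        have := hD.2 n m g (fun i _ => r i 0) hgD
          (fun i => hsub m (hconst m (r i 0) (by simpa [σ] using hr i)))
        simpa using this
      -- every operation is in D
      funext m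
      apply Set.eq_univ_of_forall
      intro f
      -- guard function
      set F : Op A (m + 1) :=
        fun v => if v (Fin.last m) ∈ ρ then a else f (fun i => v i.castSucc) with hF
      have hFP : F ∈ Pol σ (m + 1) := by
        intro s hs
        have hl : s (Fin.last m) 0 ∈ ρ := hs (Fin.last m)
        simp only [σ, Set.mem_setOf_eq]
        simp [F, hl, ha]
      set G : Fin (m + 1) → Op A m :=
        Fin.lastCases (fun _ => b') (fun i v => v i) with hG
      have hGD : ∀ i, G i ∈ D m := by
        intro i
        refine Fin.lastCases ?_ ?_ i
        · simpa [G] using hconstD m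
        · intro i
          simpa [G] using hD.1 m i
      have hcomp := hD.2 (m + 1) m F G (hsub (m + 1) hFP) hGD
      have : (fun v : Fin m → A => F (fun i => G i v)) = f := by
        funext v
        have hlast : G (Fin.last m) v = b' := by simp [G]
        have hcs : ∀ i : Fin m, G i.castSucc v = v i := by intro i; simp [G]
        simp [F, hlast, hcs, hb'ρ]
      rwa [this] at hcomp
end

section
/- Let A be a finite set with |A| ≥ 2 and let ρ ⊆ A^h be a central relation on A. Then Pol(ρ) is a maximal clone on A. -/
/-- The relation `ι_h^A` of tuples with two equal coordinates. -/
def iotaRel (A : Type*) (h : ℕ) : Set (Fin h → A) :=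
  {v | ∃ i j : Fin h, i ≠ j ∧ v i = v j}

/-- A relation is totally reflexive if it contains `ι_h^A`. -/
def TotallyReflexive {A : Type*} {h : ℕ} (ρ : Set (Fin h → A)) : Prop :=
  iotaRel A h ⊆ ρ

/-- A relation is totally symmetric if it is closed under permutations of coordinates. -/
def TotallySymmetric {A : Type*} {h : ℕ} (ρ : Set (Fin h → A)) : Prop :=
  ∀ (σ : Equiv.Perm (Fin h)) (v : Fin h → A), v ∈ ρ → (fun i => v (σ i)) ∈ ρ

/-- The center of a relation: elements `a` such that every tuple containing `a` is in `ρ`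
(for totally symmetric `ρ` this agrees with the usual definition). -/
def centerRel {A : Type*} {h : ℕ} (ρ : Set (Fin h → A)) : Set A :=
  {a | ∀ v : Fin h → A, (∃ i, v i = a) → v ∈ ρ}

/-- An `h`-ary central relation. -/
def IsCentral {A : Type*} [Fintype A] {h : ℕ} (ρ : Set (Fin h → A)) : Prop :=
  1 ≤ h ∧ h ≤ Fintype.card A ∧ TotallyReflexive ρ ∧ TotallySymmetric ρ ∧
  (centerRel ρ).Nonempty ∧ centerRel ρ ≠ Set.univ

lemma pol_isClone {A : Type*} {h : ℕ} {ρ : Set (Fin h → A)} : IsClone (Pol ρ) := by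
  constructor
  · intro n i t ht
    exact ht i
  · intro n k f g hf hg t ht
    exact hf (fun i => fun j => g i (fun a => t a j)) (fun i => hg i t ht)

open Classical in
/-- Prescription function: value `r j` at point `q j`, default `c` elsewhere. -/
noncomputable def presc {A : Type*} {h m : ℕ} (c : A) (q : Fin h → (Fin m → A))
    (r : Fin h → A) : Op A m :=
  fun x => if hx : ∃ j, x = q j then r hx.choose else c

lemma presc_apply {A : Type*} {h m : ℕ} (c : A) {q : Fin h → (Fin m → A)}
    (hq : Function.Injective q) (r : Fin h → A) (j : Fin h) :
    presc c q r (q j) = r j := by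
  have hx : ∃ j', (q j : Fin m → A) = q j' := ⟨j, rfl⟩
  simp only [presc]
  rw [dif_pos hx]
  exact congrArg r (hq hx.choose_spec).symm

lemma presc_mem {A : Type*} {h m : ℕ} {ρ : Set (Fin h → A)} {c : A}
    (hc : c ∈ centerRel ρ) (href : TotallyReflexive ρ) (hsym : TotallySymmetric ρ)
    {q : Fin h → (Fin m → A)} (hq : Function.Injective q)
    {r : Fin h → A} (hr : r ∈ ρ) : presc c q r ∈ Pol ρ m := by
  intro t ht
  by_cases hall : ∀ j, ∃ j', (fun i => t i j) = q j'
  · choose ψ hψ using hall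
    have hoψ : ∀ j, presc c q r (fun i => t i j) = r (ψ j) := by
      intro j
      rw [hψ j, presc_apply c hq]
    by_cases hinj : Function.Injective ψ
    · have hbij : Function.Bijective ψ := Finite.injective_iff_bijective.mp hinj
      have := hsym (Equiv.ofBijective ψ hbij) r hr
      have heq : (fun j => presc c q r (fun i => t i j)) =
          (fun i => r ((Equiv.ofBijective ψ hbij) i)) := by
        funext j
        rw [hoψ j]
        rfl
      rw [heq]
      exact this
    · rw [Function.not_injective_iff] at hinj
      obtain ⟨j, j', heq, hne⟩ := hinj
      apply href
      refine ⟨j, j', hne, ?_⟩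
      show presc c q r (fun i => t i j) = presc c q r (fun i => t i j')
      rw [hoψ j, hoψ j', heq]
  · push_neg at hall
    obtain ⟨j, hj⟩ := hall
    have hcval : presc c q r (fun i => t i j) = c := by
      simp only [presc]
      rw [dif_neg]
      rintro ⟨j', hj'⟩
      exact hj j' hj'
    exact hc _ ⟨j, hcval⟩

/-- the part of centrality used in the generation lemma -/
def IsCentral' {A : Type*} {h : ℕ} (ρ : Set (Fin h → A)) : Prop :=
  TotallyReflexive ρ ∧ TotallySymmetric ρ ∧ ∃ c, c ∈ centerRel ρ

lemma gen_all {A : Type*} [Fintype A] {h : ℕ} {ρ : Set (Fin h → A)}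
    (hcen : IsCentral' ρ)
    {D : ∀ n, Set (Op A n)} (hD : IsClone D) (hPD : ∀ n, Pol ρ n ⊆ D n)
    {n₀ : ℕ} {f : Op A n₀} (hfD : f ∈ D n₀) (hf : f ∉ Pol ρ n₀)
    (n : ℕ) (F : Op A n) : F ∈ D n := by
  classical
  obtain ⟨href, hsym, c, hc⟩ := hcen
  rw [Pol, Set.mem_setOf_eq, Preserves] at hf
  push_neg at hf
  obtain ⟨r, hr, hs⟩ := hf
  set s : Fin h → A := fun j => f (fun i => r i j) with hs_def
  let Qt := {q : Fin h → (Fin n → A) // Function.Injective q}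
  haveI : Fintype Qt := Fintype.ofFinite _
  set M := Fintype.card Qt with hM
  let e : Qt ≃ Fin M := Fintype.equivFin Qt
  let V : Qt → Op A n := fun Q => fun x => f (fun i => presc c Q.1 (r i) x)
  have hV : ∀ Q, V Q ∈ D n := fun Q =>
    hD.2 n₀ n f (fun i => presc c Q.1 (r i)) hfD
      (fun i => hPD n (presc_mem hc href hsym Q.2 (hr i)))
  have hVapp : ∀ (Q : Qt) (j : Fin h), V Q (Q.1 j) = s j := by
    intro Q j
    show f (fun i => presc c Q.1 (r i) (Q.1 j)) = s j
    rw [hs_def]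
    exact congrArg f (funext fun i => presc_apply c Q.2 (r i) j)
  let G : Op A (n + M) := fun z =>
    if (∀ Q : Qt, z (Fin.natAdd n (e Q)) = V Q (fun i => z (Fin.castAdd M i))) then
      F (fun i => z (Fin.castAdd M i)) else c
  have hG : G ∈ Pol ρ (n + M) := by
    intro t ht
    by_cases hall : ∀ j, ∀ Q : Qt,
        t (Fin.natAdd n (e Q)) j = V Q (fun i => t (Fin.castAdd M i) j)
    · by_cases hinj : Function.Injective (fun j (i : Fin n) => t (Fin.castAdd M i) j)
      · exfalso
        set Q₀ : Qt := ⟨fun j i => t (Fin.castAdd M i) j, hinj⟩ with hQ₀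
        have hrow : t (Fin.natAdd n (e Q₀)) = s := by
          funext j
          rw [hall j Q₀]
          exact hVapp Q₀ j
        exact hs (hrow ▸ ht (Fin.natAdd n (e Q₀)))
      · rw [Function.not_injective_iff] at hinj
        obtain ⟨j, j', heq, hne⟩ := hinj
        have hcol : ∀ j, G (fun i => t i j) = F (fun i => t (Fin.castAdd M i) j) :=
          fun j => if_pos (hall j)
        apply href
        refine ⟨j, j', hne, ?_⟩
        show G (fun i => t i j) = G (fun i => t i j')
        rw [hcol j, hcol j', heq]
    · push_neg at hall
      obtain ⟨j, Q, hQ⟩ := hall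
      have hcval : G (fun i => t i j) = c := if_neg (fun hcontra => hQ (hcontra Q))
      exact hc _ ⟨j, hcval⟩
  have hGD : G ∈ D (n + M) := hPD _ hG
  let g : Fin (n + M) → Op A n :=
    Fin.addCases (fun i => fun v => v i) (fun mi => V (e.symm mi))
  have hgl : ∀ i : Fin n, g (Fin.castAdd M i) = fun v => v i := fun i =>
    Fin.addCases_left i
  have hgr : ∀ mi : Fin M, g (Fin.natAdd n mi) = V (e.symm mi) := fun mi =>
    Fin.addCases_right mi
  have hg : ∀ idx, g idx ∈ D n := by
    intro idx
    refine Fin.addCases (motive := fun idx => g idx ∈ D n) ?_ ?_ idx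
    · intro i
      rw [hgl i]
      exact hD.1 n i
    · intro mi
      rw [hgr mi]
      exact hV _
  have hcomp := hD.2 (n + M) n G g hGD hg
  have heqF : (fun v : Fin n → A => G (fun idx => g idx v)) = F := by
    funext v
    have hx : ∀ i : Fin n, g (Fin.castAdd M i) v = v i := fun i => by rw [hgl i]
    show (if (∀ Q : Qt, g (Fin.natAdd n (e Q)) v
            = V Q (fun i => g (Fin.castAdd M i) v)) then
        F (fun i => g (Fin.castAdd M i) v) else c) = F v
    rw [if_pos]
    · exact congrArg F (funext hx)
    · intro Q
      rw [hgr (e Q), Equiv.symm_apply_apply]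
      exact congrArg (V Q) (funext hx).symm
  rw [heqF] at hcomp
  exact hcomp

/-- `Pol` of a central relation on a finite set with at least two elements is a maximal clone. -/
theorem central_maximal {A : Type*} [Fintype A] (hA : 2 ≤ Fintype.card A)
    (h : ℕ) (ρ : Set (Fin h → A)) (hc : IsCentral ρ) :
    IsMaximalClone (Pol ρ) := by
  classical
  obtain ⟨h1, h2, href, hsym, ⟨c, hcc⟩, hcne⟩ := hc
  have hcen' : IsCentral' ρ := ⟨href, hsym, c, hcc⟩
  refine ⟨pol_isClone, ?_, ?_⟩
  · -- Pol ρ is proper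
    have hcard : Fintype.card (Fin h) ≤ Fintype.card A := by rwa [Fintype.card_fin]
    obtain ⟨emb⟩ := Function.Embedding.nonempty_of_card_le hcard
    have hj0 : 0 < h := h1
    set j₀ : Fin h := ⟨0, hj0⟩ with hj₀
    set d : Fin h → A := fun j => Equiv.swap (emb j₀) c (emb j) with hd
    have hd_inj : Function.Injective d :=
      (Equiv.swap (emb j₀) c).injective.comp emb.injective
    have hd0 : d j₀ = c := Equiv.swap_apply_left _ _
    have hdρ : d ∈ ρ := hcc d ⟨j₀, hd0⟩
    obtain ⟨b, hb⟩ := (Set.ne_univ_iff_exists_notMem _).mp hcne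
    rw [centerRel, Set.mem_setOf_eq] at hb
    push_neg at hb
    obtain ⟨v, _, hv⟩ := hb
    set q : Fin h → (Fin 1 → A) := fun j => fun _ => d j with hq
    have hq_inj : Function.Injective q := by
      intro a b hab
      exact hd_inj (congrFun hab 0)
    set P : Op A 1 := presc c q v with hP
    intro hEq
    have hPmem : P ∈ Pol ρ 1 := by
      rw [congrFun hEq 1]
      trivial
    have := hPmem (fun _ => d) (fun _ => hdρ)
    have heq2 : (fun j => P (fun i => (fun _ : Fin 1 => d) i j)) = v := by
      funext j
      exact presc_apply c hq_inj v j
    rw [heq2] at this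
    exact hv this
  · -- maximality
    intro D hD hsub
    by_cases hDsub : ∀ n, D n ⊆ Pol ρ n
    · left
      funext n
      exact Set.Subset.antisymm (hDsub n) (hsub n)
    · right
      push_neg at hDsub
      obtain ⟨n₀, hn₀⟩ := hDsub
      obtain ⟨f, hfD, hf⟩ := Set.not_subset.mp hn₀
      funext n
      exact Set.eq_univ_of_forall fun F => gen_all hcen' hD hsub hfD hf n F
end

section
/- Let A be a finite set, h ≥ 1, and let ρ ⊆ A^h be a totally reflexive and totally symmetric h-ary relation with ρ ≠ ι_h^A. If g is a finitary operation on A that does not preserve ρ, then the clone ⟨Pol(ρ) ∪ {g}⟩ contains a unary operation f that does not preserve ρ. -/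
/-- The clone generated by a family of operations: the intersection of all clones containing it. -/
def CloneGen {A : Type*} (F : ∀ n, Set (Op A n)) : ∀ n, Set (Op A n) :=
  fun n => {f | ∀ C : ∀ m, Set (Op A m), IsClone C → (∀ m, F m ⊆ C m) → f ∈ C n}

/-- Add a single `n`-ary operation `g` to a family of operations. -/
def withOp {A : Type*} (F : ∀ m, Set (Op A m)) {n : ℕ} (g : Op A n) :
    ∀ m, Set (Op A m) :=
  fun m => F m ∪ {f | ∃ h : n = m, f = cast (congrArg (Op A) h) g}

/-- If a totally reflexive, totally symmetric `ρ ≠ ι_h^A` is not preserved by `g`, then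
`⟨Pol ρ ∪ {g}⟩` contains a unary operation not preserving `ρ`. -/
theorem unary_nonpreserving_in_clone {A : Type*} [Fintype A] (h : ℕ) (hh : 1 ≤ h)
    (ρ : Set (Fin h → A)) (htr : TotallyReflexive ρ) (hts : TotallySymmetric ρ)
    (hne : ρ ≠ iotaRel A h) (n : ℕ) (g : Op A n) (hg : ¬ Preserves g ρ) :
    ∃ f : Op A 1, f ∈ CloneGen (withOp (Pol ρ) g) 1 ∧ ¬ Preserves f ρ := by

  classical
  -- witnesses of non-preservation
  rw [Preserves] at hg; push_neg at hg
  obtain ⟨r, hr, hb⟩ := hg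
  -- a tuple in ρ with pairwise distinct entries
  have hss : iotaRel A h ⊂ ρ := htr.ssubset_of_ne (Ne.symm hne)
  obtain ⟨c, hc, hci⟩ := Set.exists_of_ssubset hss
  have hcinj : ∀ i j : Fin h, c i = c j → i = j := by
    intro i j hij
    by_contra hij'
    exact hci ⟨i, j, hij', hij⟩
  -- key lemma: ρ is closed under composing with any self-map of indices
  have key : ∀ (s : Fin h → Fin h) (v : Fin h → A), v ∈ ρ → (fun p => v (s p)) ∈ ρ := by
    intro s v hv
    by_cases hs : Function.Injective s
    · have hbij : Function.Bijective s := (Finite.injective_iff_bijective).mp hs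
      have := hts (Equiv.ofBijective s hbij) v hv
      simpa [Equiv.ofBijective] using this
    · rw [Function.Injective] at hs; push_neg at hs
      obtain ⟨p, q, hpq, hne'⟩ := hs
      exact htr ⟨p, q, hne', by simp [hpq]⟩
  -- the index map
  set t : A → Fin h := fun a => if h' : ∃ j, a = c j then h'.choose else ⟨0, hh⟩ with ht
  have htc : ∀ j : Fin h, t (c j) = j := by
    intro j
    have hex : ∃ j' : Fin h, c j = c j' := ⟨j, rfl⟩
    have := hex.choose_spec
    simp only [ht, dif_pos hex]
    exact (hcinj _ _ this).symm
  -- the unary operations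
  set U : Fin n → Op A 1 := fun i => fun v => r i (t (v 0)) with hU
  have hUPol : ∀ i, U i ∈ Pol ρ 1 := by
    intro i w hw
    exact key (fun j => t (w 0 j)) (r i) (hr i)
  refine ⟨fun v : Fin 1 → A => g (fun i => U i v), ?_, ?_⟩
  · intro C hC hFC
    have hgC : g ∈ C n := hFC n (Or.inr ⟨rfl, rfl⟩)
    have hUC : ∀ i, U i ∈ C 1 := fun i => hFC 1 (Or.inl (hUPol i))
    exact hC.2 n 1 g U hgC hUC
  · intro hp
    have := hp (fun _ => c) (fun _ => hc)
    apply hb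
    have heq : (fun j : Fin h => g (fun i => U i (fun _ => c j)))
        = (fun j : Fin h => g (fun i => r i j)) := by
      funext j
      simp [hU, htc j]
    rwa [heq] at this
end

section
/- Let A be a finite set, 1 ≤ h ≤ |A|, and let ρ ⊆ A^h be a totally reflexive and totally symmetric h-ary relation with ρ ≠ ι_h^A. If g is a unary operation on A not preserving ρ, then there is an h-element subset D = {d_1,…,d_h} of A with (d_1,…,d_h) ∉ ρ such that the clone ⟨Pol(ρ) ∪ {g}⟩ contains every unary operation on A taking values only in D. -/
/-! The tuple `d := g ∘ a` witnessing that `g` does not preserve `ρ` consists of distinct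
entries, since `ρ` is totally reflexive. An operation `f` with values in `{d_1, …, d_h}` factors
as `f x = g (a (s x))` with `s : A → Fin h`, and `x ↦ a (s x)` preserves `ρ`: applied to a tuple
of `ρ` it yields either a tuple with a repeated entry or a permutation of `a ∈ ρ`. -/

section Clones

variable {A : Type*}

theorem IsClone.comp {C : ∀ n, Set (Op A n)} (hC : IsClone C) {n k : ℕ} {f : Op A n}
    {g : Fin n → Op A k} (hf : f ∈ C n) (hg : ∀ i, g i ∈ C k) :
    (fun v : Fin k → A => f (fun i => g i v)) ∈ C k :=
  hC.2 n k f g hf hg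

theorem isClone_cloneGen (F : ∀ n, Set (Op A n)) : IsClone (CloneGen F) :=
  ⟨fun n i _ hC _ => hC.1 n i,
    fun _ _ _ _ hf hg C hC hFC => hC.comp (hf C hC hFC) fun i => hg i C hC hFC⟩

theorem subset_cloneGen (F : ∀ n, Set (Op A n)) (n : ℕ) : F n ⊆ CloneGen F n :=
  fun _ hf _ _ hFC => hFC n hf

theorem mem_withOp_self (F : ∀ m, Set (Op A m)) {n : ℕ} (g : Op A n) : g ∈ withOp F g n :=
  Or.inr ⟨rfl, rfl⟩

theorem mem_withOp_of_mem {F : ∀ m, Set (Op A m)} {n m : ℕ} (g : Op A n) {f : Op A m}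
    (hf : f ∈ F m) : f ∈ withOp F g m :=
  Or.inl hf

end Clones

section Relations

variable {A : Type*} {h : ℕ} {ρ : Set (Fin h → A)}

theorem preserves_unary_iff {f : Op A 1} :
    Preserves f ρ ↔ ∀ r ∈ ρ, (fun j => f (fun _ => r j)) ∈ ρ := by
  refine ⟨fun hf r hr => hf (fun _ => r) fun _ => hr, fun hf r hr => ?_⟩
  convert hf (r 0) (hr 0) using 4 with j i
  rw [Fin.eq_zero i]

theorem TotallyReflexive.injective_of_notMem (htr : TotallyReflexive ρ) {v : Fin h → A}
    (hv : v ∉ ρ) : Function.Injective v := by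
  intro i j hij
  by_contra hne
  exact hv (htr ⟨i, j, hne, hij⟩)

theorem preserves_comp_of_mem (htr : TotallyReflexive ρ) (hts : TotallySymmetric ρ)
    {a : Fin h → A} (ha : a ∈ ρ) {n : ℕ} (s : (Fin n → A) → Fin h) :
    Preserves (fun w : Fin n → A => a (s w)) ρ := by
  intro r _
  set σ : Fin h → Fin h := fun j => s (fun i => r i j)
  by_cases hσ : Function.Injective σ
  · exact hts (Equiv.ofBijective σ hσ.bijective_of_finite) a ha
  · obtain ⟨i, j, hij, hne⟩ := Function.not_injective_iff.mp hσ
    exact htr ⟨i, j, hne, congrArg a hij⟩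

end Relations

theorem unary_functions_into_D_general {A : Type*} (h : ℕ) (ρ : Set (Fin h → A))
    (htr : TotallyReflexive ρ) (hts : TotallySymmetric ρ)
    (g : Op A 1) (hg : ¬ Preserves g ρ) :
    ∃ d : Fin h → A, Function.Injective d ∧ d ∉ ρ ∧
      ∀ f : Op A 1, (∀ x : Fin 1 → A, ∃ i, f x = d i) →
        f ∈ CloneGen (withOp (Pol ρ) g) 1 := by
  obtain ⟨a, ha, hd⟩ : ∃ a ∈ ρ, (fun j => g (fun _ => a j)) ∉ ρ := by
    simpa only [preserves_unary_iff, not_forall, exists_prop] using hg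
  refine ⟨_, htr.injective_of_notMem hd, hd, fun f hf => ?_⟩
  choose s hs using hf
  have hu : (fun w => a (s w)) ∈ CloneGen (withOp (Pol ρ) g) 1 :=
    subset_cloneGen _ 1 (mem_withOp_of_mem g (preserves_comp_of_mem htr hts ha s))
  have hg' : g ∈ CloneGen (withOp (Pol ρ) g) 1 :=
    subset_cloneGen _ 1 (mem_withOp_self _ g)
  rw [show f = fun w => g (fun _ => a (s w)) from funext hs]
  exact (isClone_cloneGen _).comp hg' fun _ => hu

/-- If a unary `g` does not preserve a totally reflexive, totally symmetric `ρ ≠ ι_h^A`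
(`1 ≤ h ≤ |A|`), then there is an `h`-element subset `D` of `A` forming a tuple outside `ρ`
such that `⟨Pol ρ ∪ {g}⟩` contains every unary operation with values in `D`. -/
theorem unary_functions_into_D {A : Type*} [Fintype A] (h : ℕ) (hh1 : 1 ≤ h)
    (hhA : h ≤ Fintype.card A) (ρ : Set (Fin h → A))
    (htr : TotallyReflexive ρ) (hts : TotallySymmetric ρ)
    (hne : ρ ≠ iotaRel A h) (g : Op A 1) (hg : ¬ Preserves g ρ) :
    ∃ d : Fin h → A, Function.Injective d ∧ d ∉ ρ ∧
      ∀ f : Op A 1, (∀ x : Fin 1 → A, ∃ i, f x = d i) →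
        f ∈ CloneGen (withOp (Pol ρ) g) 1 :=
  unary_functions_into_D_general h ρ htr hts g hg
end

section
/- Let (S, θ1, θ2, θ3) be an S-3-system. If p and q are Mal'cev functions on S, each compatible with θ1, θ2 and θ3, then p = q. -/
/-- A ternary function is compatible with a binary relation `θ`. -/
def Compat3 {S : Type*} (p : S → S → S → S) (θ : S → S → Prop) : Prop :=
  ∀ x1 x2 x3 y1 y2 y3, θ x1 y1 → θ x2 y2 → θ x3 y3 → θ (p x1 x2 x3) (p y1 y2 y3)

/-- An S-3-system: a set with at least 4 elements and three equivalence relations,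
any two of which compose to everything and intersect in the diagonal. -/
def IsS3System {S : Type*} (θ1 θ2 θ3 : S → S → Prop) : Prop :=
  (∃ u : Fin 4 → S, Function.Injective u) ∧
  Equivalence θ1 ∧ Equivalence θ2 ∧ Equivalence θ3 ∧
  (∀ a c, ∃ b, θ1 a b ∧ θ2 b c) ∧ (∀ a c, ∃ b, θ2 a b ∧ θ1 b c) ∧
  (∀ a c, ∃ b, θ1 a b ∧ θ3 b c) ∧ (∀ a c, ∃ b, θ3 a b ∧ θ1 b c) ∧
  (∀ a c, ∃ b, θ2 a b ∧ θ3 b c) ∧ (∀ a c, ∃ b, θ3 a b ∧ θ2 b c) ∧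
  (∀ a b, θ1 a b → θ2 a b → a = b) ∧
  (∀ a b, θ1 a b → θ3 a b → a = b) ∧
  (∀ a b, θ2 a b → θ3 a b → a = b)

/-- A Mal'cev function on an S-3-system compatible with all three relations is unique. -/
theorem malcev_unique_on_S3 {S : Type*} (θ1 θ2 θ3 : S → S → Prop)
    (hS : IsS3System θ1 θ2 θ3) (p q : S → S → S → S)
    (hp1 : ∀ x z : S, p x x z = z) (hp2 : ∀ x z : S, p x z z = x)
    (hq1 : ∀ x z : S, q x x z = z) (hq2 : ∀ x z : S, q x z z = x)
    (hpc1 : Compat3 p θ1) (hpc2 : Compat3 p θ2) (hpc3 : Compat3 p θ3)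
    (hqc1 : Compat3 q θ1) (hqc2 : Compat3 q θ2) (hqc3 : Compat3 q θ3) :
    p = q := by
  obtain ⟨-, e1, e2, e3, c12, c21, c13, c31, c23, c32, d12, d13, d23⟩ := hS
  funext x y z
  -- θ1-relatedness of p x y z and q x y z
  have h1 : θ1 (p x y z) (q x y z) := by
    obtain ⟨x', hx1, hx3⟩ := c13 x y   -- θ1 x x', θ3 x' y
    obtain ⟨z', hz1, hz2⟩ := c12 z y   -- θ1 z z', θ2 z' y
    -- p x' y z' is θ2-related to x' and θ3-related to z'
    have hp2' : θ2 (p x' y z') x' := by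
      have := hpc2 x' y z' x' z' z' (e2.refl x') (e2.symm hz2) (e2.refl z')
      rwa [hp2] at this
    have hp3' : θ3 (p x' y z') z' := by
      have := hpc3 x' y z' y y z' hx3 (e3.refl y) (e3.refl z')
      rwa [hp1] at this
    have hq2' : θ2 (q x' y z') x' := by
      have := hqc2 x' y z' x' z' z' (e2.refl x') (e2.symm hz2) (e2.refl z')
      rwa [hq2] at this
    have hq3' : θ3 (q x' y z') z' := by
      have := hqc3 x' y z' y y z' hx3 (e3.refl y) (e3.refl z')
      rwa [hq1] at this
    have heq : p x' y z' = q x' y z' :=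
      d23 _ _ (e2.trans hp2' (e2.symm hq2')) (e3.trans hp3' (e3.symm hq3'))
    have hpp : θ1 (p x y z) (p x' y z') := hpc1 x y z x' y z' hx1 (e1.refl y) hz1
    have hqq : θ1 (q x y z) (q x' y z') := hqc1 x y z x' y z' hx1 (e1.refl y) hz1
    exact e1.trans hpp (heq ▸ e1.symm hqq)
  -- θ2-relatedness of p x y z and q x y z
  have h2 : θ2 (p x y z) (q x y z) := by
    obtain ⟨x', hx2, hx3⟩ := c23 x y   -- θ2 x x', θ3 x' y
    obtain ⟨z', hz2, hz1⟩ := c21 z y   -- θ2 z z', θ1 z' y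
    have hp1' : θ1 (p x' y z') x' := by
      have := hpc1 x' y z' x' z' z' (e1.refl x') (e1.symm hz1) (e1.refl z')
      rwa [hp2] at this
    have hp3' : θ3 (p x' y z') z' := by
      have := hpc3 x' y z' y y z' hx3 (e3.refl y) (e3.refl z')
      rwa [hp1] at this
    have hq1' : θ1 (q x' y z') x' := by
      have := hqc1 x' y z' x' z' z' (e1.refl x') (e1.symm hz1) (e1.refl z')
      rwa [hq2] at this
    have hq3' : θ3 (q x' y z') z' := by
      have := hqc3 x' y z' y y z' hx3 (e3.refl y) (e3.refl z')
      rwa [hq1] at this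
    have heq : p x' y z' = q x' y z' :=
      d13 _ _ (e1.trans hp1' (e1.symm hq1')) (e3.trans hp3' (e3.symm hq3'))
    have hpp : θ2 (p x y z) (p x' y z') := hpc2 x y z x' y z' hx2 (e2.refl y) hz2
    have hqq : θ2 (q x y z) (q x' y z') := hqc2 x y z x' y z' hx2 (e2.refl y) hz2
    exact e2.trans hpp (heq ▸ e2.symm hqq)
  exact d12 _ _ h1 h2
end

section
/- Let (S, θ1, θ2, θ3) be an S-3-system and let e ∈ S. Then there exist a loop (L, ·, 1) and a bijection g : L × L → S with g(1,1) = e such that for all x, y, x', y' ∈ L: (g(x,y), g(x',y')) ∈ θ1 iff x = x'; (g(x,y), g(x',y')) ∈ θ2 iff y = y'; and (g(x,y), g(x',y')) ∈ θ3 iff x·y = x'·y'. -/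
universe u

/-- Every S-3-system comes from a loop: there are a loop `(L, ·, 1)` and a bijection
`g : L × L → S` with `g (1,1) = e` realizing `θ1, θ2, θ3` as equality of first coordinates,
equality of second coordinates, and equality of products, respectively. -/
theorem s3_system_from_loop {S : Type u} (θ1 θ2 θ3 : S → S → Prop)
    (hS : IsS3System θ1 θ2 θ3) (e : S) :
    ∃ (L : Type u) (mul : L → L → L) (one : L) (g : L × L → S),
      (∀ a c : L, ∃! x : L, mul c x = a) ∧
      (∀ a c : L, ∃! y : L, mul y c = a) ∧
      (∀ x : L, mul one x = x ∧ mul x one = x) ∧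
      Function.Bijective g ∧ g (one, one) = e ∧
      (∀ x y x' y' : L, θ1 (g (x, y)) (g (x', y')) ↔ x = x') ∧
      (∀ x y x' y' : L, θ2 (g (x, y)) (g (x', y')) ↔ y = y') ∧
      (∀ x y x' y' : L, θ3 (g (x, y)) (g (x', y')) ↔ mul x y = mul x' y') := by
  obtain ⟨-, he1, he2, he3, h12, h21, h13, h31, h23, h32, d12, d13, d23⟩ := hS
  classical
  choose P hP1 hP2 using h21  -- θ2 u (P u v), θ1 (P u v) v
  choose Q hQ1 hQ2 using h12  -- θ1 u (Q u v), θ2 (Q u v) v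
  choose R hR1 hR2 using h31  -- θ3 u (R u v), θ1 (R u v) v
  choose T hT1 hT2 using h32  -- θ3 u (T u v), θ2 (T u v) v
  set sd : Setoid S := ⟨θ3, he3⟩ with hsd
  set A : S → S := fun s => T s e with hA
  set B : S → S := fun s => R s e with hB
  have hwA : ∀ a b : S, a ≈ b → A a = A b := by
    intro a b hab
    exact d23 _ _ (he2.trans (hT2 a e) (he2.symm (hT2 b e)))
      (he3.trans (he3.symm (hT1 a e)) (he3.trans hab (hT1 b e)))
  have hwB : ∀ a b : S, a ≈ b → B a = B b := by
    intro a b hab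
    refine (d13 _ _ (he1.trans (hR2 a e) (he1.symm (hR2 b e)))
      (he3.trans (he3.symm (hR1 a e)) (he3.trans hab (hR1 b e))))
  set aF : Quotient sd → S := Quotient.lift A hwA with haF
  set bF : Quotient sd → S := Quotient.lift B hwB with hbF
  -- basic properties of aF, bF
  have haF2 : ∀ x, θ2 (aF x) e := by
    refine Quotient.ind ?_; intro s; exact hT2 s e
  have hbF1 : ∀ x, θ1 (bF x) e := by
    refine Quotient.ind ?_; intro s; exact hR2 s e
  have hmemA : ∀ x, Quotient.mk sd (aF x) = x := by
    refine Quotient.ind ?_; intro s; exact Quotient.sound (he3.symm (hT1 s e))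
  have hmemB : ∀ x, Quotient.mk sd (bF x) = x := by
    refine Quotient.ind ?_; intro s; exact Quotient.sound (he3.symm (hR1 s e))
  -- A and B fix points already on the reference lines
  have auniq : ∀ s, θ2 s e → aF (Quotient.mk sd s) = s := by
    intro s hs
    exact d23 _ _ (he2.trans (hT2 s e) (he2.symm hs)) (he3.symm (hT1 s e))
  have buniq : ∀ s, θ1 s e → bF (Quotient.mk sd s) = s := by
    intro s hs
    exact d13 _ _ (he1.trans (hR2 s e) (he1.symm hs)) (he3.symm (hR1 s e))
  -- the coordinate bijection
  set gF : Quotient sd × Quotient sd → S := fun z => P (bF z.2) (aF z.1) with hgF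
  have hg1 : ∀ x y, θ1 (gF (x, y)) (aF x) := fun x y => hP2 _ _
  have hg2 : ∀ x y, θ2 (gF (x, y)) (bF y) := fun x y => he2.symm (hP1 _ _)
  have gchar : ∀ x y p, θ1 p (aF x) → θ2 p (bF y) → gF (x, y) = p := by
    intro x y p h1 h2
    exact d12 _ _ (he1.trans (hg1 x y) (he1.symm h1)) (he2.trans (hg2 x y) (he2.symm h2))
  set mulF : Quotient sd → Quotient sd → Quotient sd :=
    fun x y => Quotient.mk sd (gF (x, y)) with hmulF
  set oneL : Quotient sd := Quotient.mk sd e with honeL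
  have haone : aF oneL = e := auniq e (he2.refl e)
  have hbone : bF oneL = e := buniq e (he1.refl e)
  refine ⟨Quotient sd, mulF, oneL, gF, ?_, ?_, ?_, ⟨?_, ?_⟩, ?_, ?_, ?_, ?_⟩
  · -- right division: ∃! x, mul c x = a
    intro a c
    induction a using Quotient.ind with
    | _ ra =>
      set p : S := R ra (aF c) with hp
      have hp3 : θ3 ra p := hR1 _ _
      have hp1 : θ1 p (aF c) := hR2 _ _
      set x : Quotient sd := Quotient.mk sd (Q e p) with hx
      have hbx : bF x = Q e p := buniq _ (he1.symm (hQ1 e p))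
      have hgp : gF (c, x) = p := by
        refine gchar c x p hp1 ?_
        rw [hbx]; exact he2.symm (hQ2 e p)
      refine ⟨x, ?_, ?_⟩
      · show Quotient.mk sd (gF (c, x)) = Quotient.mk sd ra
        rw [hgp]; exact Quotient.sound (he3.symm hp3)
      · intro x' hx'
        have h3 : θ3 (gF (c, x')) (gF (c, x)) := by
          refine Quotient.exact (?_ : Quotient.mk sd _ = Quotient.mk sd _)
          rw [show Quotient.mk sd (gF (c, x)) = Quotient.mk sd ra from by
            rw [hgp]; exact Quotient.sound (he3.symm hp3)]
          exact hx'
        have heq : gF (c, x') = gF (c, x) :=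
          d13 _ _ (he1.trans (hg1 c x') (he1.symm (hg1 c x))) h3
        have h2 : θ2 (bF x') (bF x) :=
          he2.trans (he2.symm (hg2 c x')) (by rw [heq]; exact hg2 c x)
        have h1 : θ1 (bF x') (bF x) := he1.trans (hbF1 x') (he1.symm (hbF1 x))
        have : bF x' = bF x := d12 _ _ h1 h2
        rw [← hmemB x', ← hmemB x, this]
  · -- left division: ∃! y, mul y c = a
    intro a c
    induction a using Quotient.ind with
    | _ ra =>
      set p : S := T ra (bF c) with hp
      have hp3 : θ3 ra p := hT1 _ _
      have hp2 : θ2 p (bF c) := hT2 _ _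
      set y : Quotient sd := Quotient.mk sd (P e p) with hy
      have hay : aF y = P e p := auniq _ (he2.symm (hP1 e p))
      have hgp : gF (y, c) = p := by
        refine gchar y c p ?_ hp2
        rw [hay]; exact he1.symm (hP2 e p)
      refine ⟨y, ?_, ?_⟩
      · show Quotient.mk sd (gF (y, c)) = Quotient.mk sd ra
        rw [hgp]; exact Quotient.sound (he3.symm hp3)
      · intro y' hy'
        have h3 : θ3 (gF (y', c)) (gF (y, c)) := by
          refine Quotient.exact (?_ : Quotient.mk sd _ = Quotient.mk sd _)
          rw [show Quotient.mk sd (gF (y, c)) = Quotient.mk sd ra from by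
            rw [hgp]; exact Quotient.sound (he3.symm hp3)]
          exact hy'
        have heq : gF (y', c) = gF (y, c) :=
          d23 _ _ (he2.trans (hg2 y' c) (he2.symm (hg2 y c))) h3
        have h1 : θ1 (aF y') (aF y) :=
          he1.trans (he1.symm (hg1 y' c)) (by rw [heq]; exact hg1 y c)
        have h2 : θ2 (aF y') (aF y) := he2.trans (haF2 y') (he2.symm (haF2 y))
        have : aF y' = aF y := d12 _ _ h1 h2
        rw [← hmemA y', ← hmemA y, this]
  · -- identity
    intro x
    constructor
    · show Quotient.mk sd (gF (oneL, x)) = x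
      have : gF (oneL, x) = bF x := by
        refine d12 _ _ ?_ (hg2 oneL x)
        have := hg1 oneL x
        rw [haone] at this
        exact he1.trans this (he1.symm (hbF1 x))
      rw [this]; exact hmemB x
    · show Quotient.mk sd (gF (x, oneL)) = x
      have : gF (x, oneL) = aF x := by
        refine d12 _ _ (hg1 x oneL) ?_
        have := hg2 x oneL
        rw [hbone] at this
        exact he2.trans this (he2.symm (haF2 x))
      rw [this]; exact hmemA x
  · -- injective
    rintro ⟨x, y⟩ ⟨x', y'⟩ hxy
    have h1 : θ1 (gF (x, y)) (gF (x', y')) := by rw [hxy]; exact he1.refl _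
    have h2 : θ2 (gF (x, y)) (gF (x', y')) := by rw [hxy]; exact he2.refl _
    have hax : aF x = aF x' := by
      refine d12 _ _ ?_ (he2.trans (haF2 x) (he2.symm (haF2 x')))
      exact he1.trans (he1.symm (hg1 x y)) (he1.trans h1 (hg1 x' y'))
    have hby : bF y = bF y' := by
      refine d12 _ _ (he1.trans (hbF1 y) (he1.symm (hbF1 y'))) ?_
      exact he2.trans (he2.symm (hg2 x y)) (he2.trans h2 (hg2 x' y'))
    have : x = x' := by rw [← hmemA x, ← hmemA x', hax]
    have : y = y' := by rw [← hmemB y, ← hmemB y', hby]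
    simp_all
  · -- surjective
    intro s
    refine ⟨(Quotient.mk sd (P e s), Quotient.mk sd (Q e s)), ?_⟩
    have ha : aF (Quotient.mk sd (P e s)) = P e s := auniq _ (he2.symm (hP1 e s))
    have hb : bF (Quotient.mk sd (Q e s)) = Q e s := buniq _ (he1.symm (hQ1 e s))
    refine gchar _ _ s ?_ ?_
    · rw [ha]; exact he1.symm (hP2 e s)
    · rw [hb]; exact he2.symm (hQ2 e s)
  · -- g(1,1) = e
    refine gchar oneL oneL e ?_ ?_
    · rw [haone]; exact he1.refl e
    · rw [hbone]; exact he2.refl e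
  · -- θ1 iff
    intro x y x' y'
    constructor
    · intro h
      have hax : aF x = aF x' := by
        refine d12 _ _ ?_ (he2.trans (haF2 x) (he2.symm (haF2 x')))
        exact he1.trans (he1.symm (hg1 x y)) (he1.trans h (hg1 x' y'))
      rw [← hmemA x, ← hmemA x', hax]
    · intro h
      subst h
      exact he1.trans (hg1 x y) (he1.symm (hg1 x y'))
  · -- θ2 iff
    intro x y x' y'
    constructor
    · intro h
      have hby : bF y = bF y' := by
        refine d12 _ _ (he1.trans (hbF1 y) (he1.symm (hbF1 y'))) ?_
        exact he2.trans (he2.symm (hg2 x y)) (he2.trans h (hg2 x' y'))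
      rw [← hmemB y, ← hmemB y', hby]
    · intro h
      subst h
      exact he2.trans (hg2 x y) (he2.symm (hg2 x' y))
  · -- θ3 iff
    intro x y x' y'
    exact ⟨fun h => Quotient.sound h, fun h => Quotient.exact h⟩
end

section
/- Let (S, θ1, θ2, θ3) be an S-3-system admitting a Mal'cev function p on S compatible with θ1, θ2 and θ3. Then there exist an abelian group (G, +) and a bijection g : G × G → S such that for all x_i, y_i ∈ G: (g(x_1,y_1), g(x_2,y_2)) ∈ θ1 iff x_1 = x_2; (g(x_1,y_1), g(x_2,y_2)) ∈ θ2 iff y_1 = y_2; (g(x_1,y_1), g(x_2,y_2)) ∈ θ3 iff x_1 + y_1 = x_2 + y_2; the Mal'cev function is given by p(g(x_1,y_1), g(x_2,y_2), g(x_3,y_3)) = g(x_1 − x_2 + x_3, y_1 − y_2 + y_3); and every finitary operation on S compatible with θ1, θ2 and θ3 is affine with respect to the abelian group structure transported to S from G × G via g. -/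
universe u

/-- An S-3-system admitting a compatible Mal'cev function comes from an abelian group, the
Mal'cev function is `x - y + z`, and every compatible finitary operation is affine with
respect to the transported abelian group structure. -/
theorem s3_system_with_malcev_abelian {S : Type u} (θ1 θ2 θ3 : S → S → Prop)
    (hS : IsS3System θ1 θ2 θ3) (p : S → S → S → S)
    (hp1 : ∀ x z : S, p x x z = z) (hp2 : ∀ x z : S, p x z z = x)
    (hc1 : Compat3 p θ1) (hc2 : Compat3 p θ2) (hc3 : Compat3 p θ3) :
    ∃ (G : Type u) (_ : AddCommGroup G) (g : G × G ≃ S),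
      (∀ x1 y1 x2 y2 : G, θ1 (g (x1, y1)) (g (x2, y2)) ↔ x1 = x2) ∧
      (∀ x1 y1 x2 y2 : G, θ2 (g (x1, y1)) (g (x2, y2)) ↔ y1 = y2) ∧
      (∀ x1 y1 x2 y2 : G, θ3 (g (x1, y1)) (g (x2, y2)) ↔ x1 + y1 = x2 + y2) ∧
      (∀ x1 y1 x2 y2 x3 y3 : G,
        p (g (x1, y1)) (g (x2, y2)) (g (x3, y3)) =
          g (x1 - x2 + x3, y1 - y2 + y3)) ∧
      (∀ (n : ℕ) (F : (Fin n → S) → S),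
        (∀ x y : Fin n → S, (∀ i, θ1 (x i) (y i)) → θ1 (F x) (F y)) →
        (∀ x y : Fin n → S, (∀ i, θ2 (x i) (y i)) → θ2 (F x) (F y)) →
        (∀ x y : Fin n → S, (∀ i, θ3 (x i) (y i)) → θ3 (F x) (F y)) →
        ∀ a b : Fin n → S,
          g (g.symm (F a) + g.symm (F b)) =
            g (g.symm (F (fun i => g (g.symm (a i) + g.symm (b i)))) +
               g.symm (F (fun _ => g 0)))) := by

  obtain ⟨⟨uS, -⟩, eq1, eq2, eq3, h12, h21, h13, h31, h23, h32, d12, d13, d23⟩ := hS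
  have e : S := uS 0
  have pe : θ2 e e := eq2.refl e
  choose r hr3 hr2 using fun s => h32 s e
  choose q hq1 hq3 using fun a => h13 a e
  have hEex : ∀ a b : S, ∃ s, θ1 s a ∧ θ2 s (q b) := by
    intro a b
    obtain ⟨s, hs2, hs1⟩ := h21 (q b) a
    exact ⟨s, hs1, eq2.symm hs2⟩
  choose E hEt1 hEt2 using hEex
  -- uniqueness lemmas
  have r_eq : ∀ s c, θ2 c e → θ3 s c → r s = c := fun s c h2 h3 =>
    d23 _ _ (eq2.trans (hr2 s) (eq2.symm h2)) (eq3.trans (eq3.symm (hr3 s)) h3)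
  have r_id : ∀ c, θ2 c e → r c = c := fun c h => r_eq c c h (eq3.refl c)
  have r_t3 : ∀ s t, θ3 s t → r s = r t := fun s t h =>
    r_eq s (r t) (hr2 t) (eq3.trans h (hr3 t))
  have t3_of_r : ∀ s t, r s = r t → θ3 s t := fun s t h => by
    refine eq3.trans (hr3 s) ?_
    rw [h]
    exact eq3.symm (hr3 t)
  have q_eq : ∀ a t, θ1 t a → θ3 t e → q a = t := fun a t h1 h3 =>
    (d13 t (q a) (eq1.trans h1 (hq1 a)) (eq3.trans h3 (eq3.symm (hq3 a)))).symm
  have q_e : q e = e := q_eq e e (eq1.refl e) (eq3.refl e)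
  have E_eq : ∀ a b s, θ1 s a → θ2 s (q b) → E a b = s := fun a b s h1 h2 =>
    (d12 s (E a b) (eq1.trans h1 (eq1.symm (hEt1 a b)))
      (eq2.trans h2 (eq2.symm (hEt2 a b)))).symm
  have E_a_e : ∀ a, θ2 a e → E a e = a := fun a h =>
    E_eq a e a (eq1.refl a) (by rw [q_e]; exact h)
  -- closure of the θ2-class of e under p
  have pX : ∀ {a b c}, θ2 a e → θ2 b e → θ2 c e → θ2 (p a b c) e := by
    intro a b c ha hb hc
    have := hc2 a b c e e e ha hb hc
    rwa [hp1] at this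
  have q_p : ∀ a b c, q (p a b c) = p (q a) (q b) (q c) := fun a b c =>
    q_eq _ _ (hc1 _ _ _ _ _ _ (eq1.symm (hq1 a)) (eq1.symm (hq1 b)) (eq1.symm (hq1 c)))
      (by have := hc3 _ _ _ _ _ _ (hq3 a) (hq3 b) (hq3 c); rwa [hp1] at this)
  have E_p : ∀ a₁ a₂ a₃ b₁ b₂ b₃,
      E (p a₁ a₂ a₃) (p b₁ b₂ b₃) = p (E a₁ b₁) (E a₂ b₂) (E a₃ b₃) := by
    intro a₁ a₂ a₃ b₁ b₂ b₃
    refine E_eq _ _ _ (hc1 _ _ _ _ _ _ (hEt1 a₁ b₁) (hEt1 a₂ b₂) (hEt1 a₃ b₃)) ?_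
    rw [q_p]
    exact hc2 _ _ _ _ _ _ (hEt2 a₁ b₁) (hEt2 a₂ b₂) (hEt2 a₃ b₃)
  have r_p : ∀ s t v, r (p s t v) = p (r s) (r t) (r v) := fun s t v =>
    r_eq _ _ (pX (hr2 s) (hr2 t) (hr2 v)) (hc3 _ _ _ _ _ _ (hr3 s) (hr3 t) (hr3 v))
  have m_p : ∀ a₁ a₂ a₃ b₁ b₂ b₃,
      r (E (p a₁ a₂ a₃) (p b₁ b₂ b₃)) = p (r (E a₁ b₁)) (r (E a₂ b₂)) (r (E a₃ b₃)) := by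
    intro a₁ a₂ a₃ b₁ b₂ b₃
    rw [E_p, r_p]
  have m_diag : ∀ a, r (E a a) = e := by
    intro a
    have h1 : E a a = q a := E_eq a a (q a) (eq1.symm (hq1 a)) (eq2.refl _)
    rw [h1]
    exact r_eq _ _ pe (hq3 a)
  have m_e : ∀ a, θ2 a e → r (E a e) = a := by
    intro a h
    rw [E_a_e a h]
    exact r_id a h
  -- the fundamental identities
  have I1 : ∀ a b, θ2 a e → r (E a b) = p a e (r (E e b)) := by
    intro a b ha
    have h := m_p a e e e e b
    rw [hp2, hp1] at h
    rw [m_e a ha, m_diag e] at h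
    exact h
  have I2 : ∀ a b, θ2 a e → r (E a b) = p (r (E e b)) e a := by
    intro a b ha
    have h := m_p e e a b e e
    rw [hp1, hp2] at h
    rw [m_diag e, m_e a ha] at h
    exact h
  have I3 : ∀ a b c, θ2 a e → θ2 b e → θ2 c e → p a b c = p (r (E a b)) e c := by
    intro a b c ha hb hc
    have h := m_p a b c b b e
    rw [hp1] at h
    rw [m_e _ (pX ha hb hc), m_diag b, m_e c hc] at h
    exact h
  have I4 : ∀ a b c, θ2 a e → θ2 b e → θ2 c e → p a b c = p a e (r (E c b)) := by
    intro a b c ha hb hc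
    have h := m_p a b c e b b
    rw [hp2] at h
    rw [m_e _ (pX ha hb hc), m_e a ha, m_diag b] at h
    exact h
  have nu_eq : ∀ b, θ2 b e → r (E e b) = p e b e := by
    intro b hb
    have h := I4 e b e pe hb pe
    rw [hp1] at h
    exact h.symm
  have nunu : ∀ b, θ2 b e → r (E e (r (E e b))) = b := by
    intro b hb
    have h := m_p e b b e b e
    rw [hp2] at h
    rw [m_diag e, m_diag b, m_e b hb, ← nu_eq b hb] at h
    rw [hp1] at h
    exact h
  have cancel : ∀ a b, θ2 a e → θ2 b e → r (E (p a e b) b) = a := by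
    intro a b ha hb
    have h := m_p a e b e e b
    rw [hp1] at h
    rw [m_e a ha, m_diag e, m_diag b] at h
    rw [hp2] at h
    exact h
  have comm : ∀ a b, θ2 a e → θ2 b e → p a e b = p b e a := by
    intro a b ha hb
    have h := (I1 a (r (E e b)) ha).symm.trans (I2 a (r (E e b)) ha)
    rwa [nunu b hb] at h
  have inv1 : ∀ b, θ2 b e → p b e (p e b e) = e := by
    intro b hb
    have h := I4 b b e hb hb pe
    rw [hp1, nu_eq b hb] at h
    exact h.symm
  have assoc : ∀ a b c, θ2 a e → θ2 b e → θ2 c e →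
      p (p a e b) e c = p a e (p b e c) := by
    intro a b c ha hb hc
    have hx : θ2 (p a e b) e := pX ha pe hb
    have hcb : θ2 (p c e b) e := pX hc pe hb
    have hA := I3 (p a e b) b (p c e b) hx hb hcb
    rw [cancel a b ha hb] at hA
    have hB := I4 (p a e b) b (p c e b) hx hb hcb
    rw [cancel c b hc hb] at hB
    have h := hB.symm.trans hA
    rwa [comm c b hc hb] at h
  have P3core : ∀ a b c, θ2 a e → θ2 b e → θ2 c e →
      p a b c = p (p a e (p e b e)) e c := by
    intro a b c ha hb hc
    rw [I3 a b c ha hb hc, I1 a b ha, nu_eq b hb]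
  -- the group
  let G : Type u := {x : S // θ2 x e}
  letI instAdd : Add G := ⟨fun A B => ⟨p A.1 e B.1, pX A.2 pe B.2⟩⟩
  letI instNeg : Neg G := ⟨fun A => ⟨p e A.1 e, pX pe A.2 pe⟩⟩
  letI instZero : Zero G := ⟨⟨e, pe⟩⟩
  letI instAG : AddGroup G := AddGroup.ofLeftAxioms
    (fun A B C => Subtype.ext (assoc A.1 B.1 C.1 A.2 B.2 C.2))
    (fun A => Subtype.ext (hp1 e A.1))
    (fun A => Subtype.ext (by
      show p (p e A.1 e) e A.1 = e
      rw [comm (p e A.1 e) A.1 (pX pe A.2 pe) A.2]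
      exact inv1 A.1 A.2))
  letI instACG : AddCommGroup G :=
    { instAG with add_comm := fun A B => Subtype.ext (comm A.1 B.1 A.2 B.2) }
  have P3 : ∀ A B C : G, p A.1 B.1 C.1 = (A - B + C).1 := by
    intro A B C
    have h9 : A - B + C = A + -B + C := by rw [sub_eq_add_neg]
    rw [h9]
    show p A.1 B.1 C.1 = p (p A.1 e (p e B.1 e)) e C.1
    exact P3core A.1 B.1 C.1 A.2 B.2 C.2
  -- the bijection
  obtain ⟨f, hf⟩ : ∃ f : G × G → S, ∀ x y : G, f (x, y) = E x.1 (p e y.1 e) :=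
    ⟨fun z => E z.1.1 (p e z.2.1 e), fun _ _ => rfl⟩
  have fr : ∀ x y : G, r (E x.1 (p e y.1 e)) = p x.1 e y.1 := by
    intro x y
    rw [I1 x.1 (p e y.1 e) x.2, ← nu_eq y.1 y.2, nunu y.1 y.2]
  have hinj : Function.Injective f := by
    rintro ⟨x1, y1⟩ ⟨x2, y2⟩ h
    rw [hf, hf] at h
    have hx : x1 = x2 := by
      refine Subtype.ext (d12 _ _ ?_ (eq2.trans x1.2 (eq2.symm x2.2)))
      have h1 : θ1 x1.1 (E x2.1 (p e y2.1 e)) := by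
        rw [← h]; exact eq1.symm (hEt1 _ _)
      exact eq1.trans h1 (hEt1 _ _)
    have hq2 : θ2 (q (p e y1.1 e)) (q (p e y2.1 e)) := by
      have h1 : θ2 (q (p e y1.1 e)) (E x2.1 (p e y2.1 e)) := by
        rw [← h]; exact eq2.symm (hEt2 _ _)
      exact eq2.trans h1 (hEt2 _ _)
    have hqeq : q (p e y1.1 e) = q (p e y2.1 e) :=
      d23 _ _ hq2 (eq3.trans (hq3 _) (eq3.symm (hq3 _)))
    have hb : p e y1.1 e = p e y2.1 e := by
      refine d12 _ _ ?_ (eq2.trans (pX pe y1.2 pe) (eq2.symm (pX pe y2.2 pe)))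
      have h1 : θ1 (q (p e y1.1 e)) (p e y2.1 e) := by
        rw [hqeq]; exact eq1.symm (hq1 _)
      exact eq1.trans (hq1 _) h1
    have hy : y1 = y2 := neg_injective (Subtype.ext hb : (-y1 : G) = -y2)
    rw [hx, hy]
  have hsurj : Function.Surjective f := by
    intro s
    obtain ⟨x0, hx1, hx2⟩ := h12 s e
    obtain ⟨w, hw2, hw3⟩ := h23 s e
    obtain ⟨b0, hb1, hb2⟩ := h12 w e
    have hqb : q b0 = w := q_eq b0 w hb1 hw3
    refine ⟨(⟨x0, hx2⟩, -⟨b0, hb2⟩), ?_⟩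
    rw [hf]
    have hred : p e ((-(⟨b0, hb2⟩ : G)).1) e = b0 := by
      show p e (p e b0 e) e = b0
      rw [← nu_eq b0 hb2, ← nu_eq (r (E e b0)) (hr2 _)]
      exact nunu b0 hb2
    rw [hred]
    exact E_eq x0 b0 s hx1 (by rw [hqb]; exact hw2)
  let gE : G × G ≃ S := Equiv.ofBijective f ⟨hinj, hsurj⟩
  have hfg : ∀ z : G × G, f z = gE z := fun _ => rfl
  have th1p : ∀ x1 y1 x2 y2 : G, θ1 (f (x1, y1)) (f (x2, y2)) ↔ x1 = x2 := by
    intro x1 y1 x2 y2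
    rw [hf, hf]
    constructor
    · intro h
      refine Subtype.ext (d12 _ _ ?_ (eq2.trans x1.2 (eq2.symm x2.2)))
      exact eq1.trans (eq1.symm (hEt1 _ _)) (eq1.trans h (hEt1 _ _))
    · intro h
      rw [h]
      exact eq1.trans (hEt1 _ _) (eq1.symm (hEt1 _ _))
  have th2p : ∀ x1 y1 x2 y2 : G, θ2 (f (x1, y1)) (f (x2, y2)) ↔ y1 = y2 := by
    intro x1 y1 x2 y2
    rw [hf, hf]
    constructor
    · intro h
      have hq2 : θ2 (q (p e y1.1 e)) (q (p e y2.1 e)) :=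
        eq2.trans (eq2.symm (hEt2 _ _)) (eq2.trans h (hEt2 _ _))
      have hqeq : q (p e y1.1 e) = q (p e y2.1 e) :=
        d23 _ _ hq2 (eq3.trans (hq3 _) (eq3.symm (hq3 _)))
      have hb : p e y1.1 e = p e y2.1 e := by
        refine d12 _ _ ?_ (eq2.trans (pX pe y1.2 pe) (eq2.symm (pX pe y2.2 pe)))
        have h1 : θ1 (q (p e y1.1 e)) (p e y2.1 e) := by
          rw [hqeq]; exact eq1.symm (hq1 _)
        exact eq1.trans (hq1 _) h1
      exact neg_injective (Subtype.ext hb : (-y1 : G) = -y2)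
    · intro h
      rw [h]
      exact eq2.trans (hEt2 _ _) (eq2.symm (hEt2 _ _))
  have th3p : ∀ x1 y1 x2 y2 : G, θ3 (f (x1, y1)) (f (x2, y2)) ↔ x1 + y1 = x2 + y2 := by
    intro x1 y1 x2 y2
    rw [hf, hf]
    constructor
    · intro h
      have h' := r_t3 _ _ h
      rw [fr, fr] at h'
      exact Subtype.ext h'
    · intro h
      apply t3_of_r
      rw [fr, fr]
      exact congrArg Subtype.val h
  have hB4 : ∀ x1 y1 x2 y2 x3 y3 : G,
      p (f (x1, y1)) (f (x2, y2)) (f (x3, y3)) = f (x1 - x2 + x3, y1 - y2 + y3) := by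
    intro x1 y1 x2 y2 x3 y3
    rw [hf, hf, hf, hf, ← E_p]
    have e1 : p x1.1 x2.1 x3.1 = (x1 - x2 + x3).1 := P3 x1 x2 x3
    have e2 : p (p e y1.1 e) (p e y2.1 e) (p e y3.1 e) = p e (y1 - y2 + y3).1 e := by
      have h0 := P3 (-y1) (-y2) (-y3)
      have h9 : (-y1) - (-y2) + (-y3) = -(y1 - y2 + y3) := by abel
      rw [h9] at h0
      exact h0
    rw [e1, e2]
  refine ⟨G, instACG, gE, ?_, ?_, ?_, ?_, ?_⟩
  · intro x1 y1 x2 y2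
    exact th1p x1 y1 x2 y2
  · intro x1 y1 x2 y2
    exact th2p x1 y1 x2 y2
  · intro x1 y1 x2 y2
    exact th3p x1 y1 x2 y2
  · intro x1 y1 x2 y2 x3 y3
    exact hB4 x1 y1 x2 y2 x3 y3
  · intro n F hF1 hF2 hF3 a b
    have gsa : ∀ z : G × G, gE.symm (gE z) = z := gE.symm_apply_apply
    have gas : ∀ s : S, gE (gE.symm s) = s := gE.apply_symm_apply
    have T1 : ∀ s t : S, θ1 s t ↔ (gE.symm s).1 = (gE.symm t).1 := by
      intro s t
      have h0 := th1p (gE.symm s).1 (gE.symm s).2 (gE.symm t).1 (gE.symm t).2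
      rw [hfg, hfg, Prod.mk.eta, Prod.mk.eta, gas, gas] at h0
      exact h0
    have T2 : ∀ s t : S, θ2 s t ↔ (gE.symm s).2 = (gE.symm t).2 := by
      intro s t
      have h0 := th2p (gE.symm s).1 (gE.symm s).2 (gE.symm t).1 (gE.symm t).2
      rw [hfg, hfg, Prod.mk.eta, Prod.mk.eta, gas, gas] at h0
      exact h0
    have T3 : ∀ s t : S, θ3 s t ↔
        (gE.symm s).1 + (gE.symm s).2 = (gE.symm t).1 + (gE.symm t).2 := by
      intro s t
      have h0 := th3p (gE.symm s).1 (gE.symm s).2 (gE.symm t).1 (gE.symm t).2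
      rw [hfg, hfg, Prod.mk.eta, Prod.mk.eta, gas, gas] at h0
      exact h0
    have J1 : ∀ s t : Fin n → S, (∀ i, (gE.symm (s i)).1 = (gE.symm (t i)).1) →
        (gE.symm (F s)).1 = (gE.symm (F t)).1 :=
      fun s t h => (T1 _ _).1 (hF1 s t fun i => (T1 _ _).2 (h i))
    have J2 : ∀ s t : Fin n → S, (∀ i, (gE.symm (s i)).2 = (gE.symm (t i)).2) →
        (gE.symm (F s)).2 = (gE.symm (F t)).2 :=
      fun s t h => (T2 _ _).1 (hF2 s t fun i => (T2 _ _).2 (h i))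
    have J3 : ∀ s t : Fin n → S,
        (∀ i, (gE.symm (s i)).1 + (gE.symm (s i)).2 = (gE.symm (t i)).1 + (gE.symm (t i)).2) →
        (gE.symm (F s)).1 + (gE.symm (F s)).2 = (gE.symm (F t)).1 + (gE.symm (F t)).2 :=
      fun s t h => (T3 _ _).1 (hF3 s t fun i => (T3 _ _).2 (h i))
    obtain ⟨α, hα⟩ : ∃ α : Fin n → G, ∀ i, α i = (gE.symm (a i)).1 := ⟨_, fun _ => rfl⟩
    obtain ⟨β, hβ⟩ : ∃ β : Fin n → G, ∀ i, β i = (gE.symm (a i)).2 := ⟨_, fun _ => rfl⟩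
    obtain ⟨γ, hγ⟩ : ∃ γ : Fin n → G, ∀ i, γ i = (gE.symm (b i)).1 := ⟨_, fun _ => rfl⟩
    obtain ⟨δ, hδ⟩ : ∃ δ : Fin n → G, ∀ i, δ i = (gE.symm (b i)).2 := ⟨_, fun _ => rfl⟩
    have key : ∀ P Q R T U V : G, P + V = Q + U → T + U = R + V → R + Q = P + T := by
      intro P Q R T U V h1 h2
      have h4 : (R + Q) + (U + V) = (P + T) + (U + V) := by
        calc (R + Q) + (U + V) = (Q + U) + (R + V) := by abel
          _ = (P + V) + (T + U) := by rw [h1, h2]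
          _ = (P + T) + (U + V) := by abel
      exact add_right_cancel h4
    have key2 : ∀ P Q R T U V : G, U + P = V + Q → V + T = U + R → R + Q = P + T := by
      intro P Q R T U V h1 h2
      have h4 : (R + Q) + (U + V) = (P + T) + (U + V) := by
        calc (R + Q) + (U + V) = (V + Q) + (U + R) := by abel
          _ = (U + P) + (V + T) := by rw [h1, h2]
          _ = (P + T) + (U + V) := by abel
      exact add_right_cancel h4
    suffices hsuf : gE.symm (F a) + gE.symm (F b) =
        gE.symm (F (fun i => gE (gE.symm (a i) + gE.symm (b i)))) +
          gE.symm (F (fun _ => gE 0)) from congrArg _ hsuf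
    refine Prod.ext ?_ ?_
    · rw [Prod.fst_add, Prod.fst_add]
      have h1 : (gE.symm (F (fun i => gE (gE.symm (a i) + gE.symm (b i))))).1 =
          (gE.symm (F (fun i => gE (α i + γ i, β i)))).1 := by
        refine J1 _ _ fun i => ?_
        show (gE.symm (gE (gE.symm (a i) + gE.symm (b i)))).1 =
          (gE.symm (gE (α i + γ i, β i))).1
        rw [gsa, gsa, Prod.fst_add, hα, hγ]
      have h2 : (gE.symm (F (fun i => gE (α i + γ i, β i)))).2 = (gE.symm (F a)).2 := by
        refine J2 _ _ fun i => ?_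
        show (gE.symm (gE (α i + γ i, β i))).2 = (gE.symm (a i)).2
        rw [gsa]
        exact hβ i
      have h3 : (gE.symm (F (fun i => gE (α i + γ i, β i)))).1 +
            (gE.symm (F (fun i => gE (α i + γ i, β i)))).2 =
          (gE.symm (F (fun i => gE (γ i, α i + β i)))).1 +
            (gE.symm (F (fun i => gE (γ i, α i + β i)))).2 := by
        refine J3 _ _ fun i => ?_
        show (gE.symm (gE (α i + γ i, β i))).1 + (gE.symm (gE (α i + γ i, β i))).2 =
          (gE.symm (gE (γ i, α i + β i))).1 + (gE.symm (gE (γ i, α i + β i))).2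
        rw [gsa, gsa]
        show (α i + γ i) + β i = γ i + (α i + β i)
        abel
      have h4 : (gE.symm (F (fun i => gE (γ i, α i + β i)))).1 = (gE.symm (F b)).1 := by
        refine J1 _ _ fun i => ?_
        show (gE.symm (gE (γ i, α i + β i))).1 = (gE.symm (b i)).1
        rw [gsa]
        exact hγ i
      have h5 : (gE.symm (F (fun i => gE (γ i, α i + β i)))).2 =
          (gE.symm (F (fun i => gE ((0 : G), α i + β i)))).2 := by
        refine J2 _ _ fun i => ?_
        show (gE.symm (gE (γ i, α i + β i))).2 = (gE.symm (gE ((0 : G), α i + β i))).2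
        rw [gsa, gsa]
      have h6 : (gE.symm (F (fun i => gE ((0 : G), α i + β i)))).1 +
            (gE.symm (F (fun i => gE ((0 : G), α i + β i)))).2 =
          (gE.symm (F a)).1 + (gE.symm (F a)).2 := by
        refine J3 _ _ fun i => ?_
        show (gE.symm (gE ((0 : G), α i + β i))).1 + (gE.symm (gE ((0 : G), α i + β i))).2 =
          (gE.symm (a i)).1 + (gE.symm (a i)).2
        rw [gsa, ← hα i, ← hβ i]
        show (0 : G) + (α i + β i) = α i + β i
        rw [zero_add]
      have h7 : (gE.symm (F (fun i => gE ((0 : G), α i + β i)))).1 =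
          (gE.symm (F (fun _ => gE 0))).1 := by
        refine J1 _ _ fun i => ?_
        show (gE.symm (gE ((0 : G), α i + β i))).1 = (gE.symm (gE (0 : G × G))).1
        rw [gsa, gsa]
        exact Prod.fst_zero.symm
      rw [h1, ← h7]
      rw [h2, h4, h5] at h3
      exact key _ _ _ _ _ _ h3 h6
    · rw [Prod.snd_add, Prod.snd_add]
      have k1 : (gE.symm (F (fun i => gE (gE.symm (a i) + gE.symm (b i))))).2 =
          (gE.symm (F (fun i => gE (α i, β i + δ i)))).2 := by
        refine J2 _ _ fun i => ?_
        show (gE.symm (gE (gE.symm (a i) + gE.symm (b i)))).2 =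
          (gE.symm (gE (α i, β i + δ i))).2
        rw [gsa, gsa, Prod.snd_add, hβ, hδ]
      have k2 : (gE.symm (F (fun i => gE (α i, β i + δ i)))).1 = (gE.symm (F a)).1 := by
        refine J1 _ _ fun i => ?_
        show (gE.symm (gE (α i, β i + δ i))).1 = (gE.symm (a i)).1
        rw [gsa]
        exact hα i
      have k3 : (gE.symm (F (fun i => gE (α i, β i + δ i)))).1 +
            (gE.symm (F (fun i => gE (α i, β i + δ i)))).2 =
          (gE.symm (F (fun i => gE (α i + β i, δ i)))).1 +
            (gE.symm (F (fun i => gE (α i + β i, δ i)))).2 := by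
        refine J3 _ _ fun i => ?_
        show (gE.symm (gE (α i, β i + δ i))).1 + (gE.symm (gE (α i, β i + δ i))).2 =
          (gE.symm (gE (α i + β i, δ i))).1 + (gE.symm (gE (α i + β i, δ i))).2
        rw [gsa, gsa]
        show α i + (β i + δ i) = (α i + β i) + δ i
        abel
      have k4 : (gE.symm (F (fun i => gE (α i + β i, δ i)))).2 = (gE.symm (F b)).2 := by
        refine J2 _ _ fun i => ?_
        show (gE.symm (gE (α i + β i, δ i))).2 = (gE.symm (b i)).2
        rw [gsa]
        exact hδ i
      have k5 : (gE.symm (F (fun i => gE (α i + β i, δ i)))).1 =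
          (gE.symm (F (fun i => gE (α i + β i, (0 : G))))).1 := by
        refine J1 _ _ fun i => ?_
        show (gE.symm (gE (α i + β i, δ i))).1 = (gE.symm (gE (α i + β i, (0 : G)))).1
        rw [gsa, gsa]
      have k6 : (gE.symm (F (fun i => gE (α i + β i, (0 : G))))).1 +
            (gE.symm (F (fun i => gE (α i + β i, (0 : G))))).2 =
          (gE.symm (F a)).1 + (gE.symm (F a)).2 := by
        refine J3 _ _ fun i => ?_
        show (gE.symm (gE (α i + β i, (0 : G)))).1 + (gE.symm (gE (α i + β i, (0 : G)))).2 =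
          (gE.symm (a i)).1 + (gE.symm (a i)).2
        rw [gsa, ← hα i, ← hβ i]
        show (α i + β i) + (0 : G) = α i + β i
        rw [add_zero]
      have k7 : (gE.symm (F (fun i => gE (α i + β i, (0 : G))))).2 =
          (gE.symm (F (fun _ => gE 0))).2 := by
        refine J2 _ _ fun i => ?_
        show (gE.symm (gE (α i + β i, (0 : G)))).2 = (gE.symm (gE (0 : G × G))).2
        rw [gsa, gsa]
        exact Prod.snd_zero.symm
      rw [k1, ← k7]
      rw [k2, k4, k5] at k3
      exact key2 _ _ _ _ _ _ k3 k6
end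

section
/- Let p be a prime, m ≥ 1, and let F be a finite field with |F| = p^m. A function f : F^n → F is affine with respect to the additive group of F if and only if there exist a_0 ∈ F and coefficients a_{ij} ∈ F (1 ≤ i ≤ n, 0 ≤ j ≤ m−1) such that f(x_1,…,x_n) = a_0 + Σ_{i=1}^{n} Σ_{j=0}^{m−1} a_{ij} · x_i^{p^j} for all (x_1,…,x_n) ∈ F^n. -/
/-!
Subtracting `f 0` turns an affine map into an additive one, and an additive map on `Kⁿ` is the
sum of its restrictions to the coordinate axes, so everything reduces to additive maps `K → K`.
The linearized polynomials `∑_{j<m} a_j X^{p^j}` are additive, and distinct ones give distinct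
maps because their difference has degree `< p^m = |K|`. Additive maps `K → K` are the
`𝔽_p`-linear endomorphisms of `K ≅ 𝔽_pᵐ`, so there are `|K|^m` of them, exactly as many as
linearized polynomials; hence every additive map is one.
-/

open Polynomial

theorem affine_iff_exists_addMonoidHom {V A : Type*} [AddCommGroup V] [AddCommGroup A]
    (f : V → A) :
    (∀ x y, f x + f y = f (x + y) + f 0) ↔ ∃ (c : A) (g : V →+ A), ∀ x, f x = c + g x := by
  constructor
  · intro hf
    refine ⟨f 0, AddMonoidHom.mk' (fun x => f x - f 0) fun x y => ?_, fun x => ?_⟩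
    · rw [sub_add_sub_comm, hf]; abel
    · simp
  · rintro ⟨c, g, hg⟩ x y
    simp only [hg, map_add, map_zero]
    abel

section Linearized

variable {K : Type*} {m : ℕ}

noncomputable def linearizedPoly [Semiring K] (p : ℕ) (a : Fin m → K) : K[X] :=
  ∑ j : Fin m, monomial (p ^ (j : ℕ)) (a j)

theorem natDegree_linearizedPoly_lt [Semiring K] {p : ℕ} (hp : 1 < p) (a : Fin m → K) :
    (linearizedPoly p a).natDegree < p ^ m := by
  have hlt : ∀ j : Fin m, p ^ (j : ℕ) < p ^ m := fun j => Nat.pow_lt_pow_right hp j.isLt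
  refine lt_of_le_of_lt (natDegree_sum_le_of_forall_le _ _ fun j _ => ?_)
    (Nat.sub_one_lt (pow_ne_zero m (by omega)))
  exact (natDegree_monomial_le _).trans (Nat.le_sub_one_of_lt (hlt j))

theorem coeff_linearizedPoly_pow [Semiring K] {p : ℕ} (hp : 1 < p) (a : Fin m → K) (j : Fin m) :
    (linearizedPoly p a).coeff (p ^ (j : ℕ)) = a j := by
  simp [linearizedPoly, finsetSum_coeff, coeff_monomial, Nat.pow_right_inj hp, Fin.val_inj]

def linearizedHom [CommSemiring K] (p : ℕ) [ExpChar K p] (a : Fin m → K) : K →+ K where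
  toFun t := ∑ j, a j * t ^ p ^ (j : ℕ)
  map_zero' := by simp [zero_pow (pow_ne_zero _ (expChar_pos K p).ne')]
  map_add' x y := by simp only [add_pow_expChar_pow, mul_add, Finset.sum_add_distrib]

theorem linearizedHom_apply [CommSemiring K] (p : ℕ) [ExpChar K p] (a : Fin m → K) (t : K) :
    linearizedHom p a t = ∑ j, a j * t ^ p ^ (j : ℕ) := rfl

theorem eval_linearizedPoly [CommSemiring K] (p : ℕ) [ExpChar K p] (a : Fin m → K) (t : K) :
    (linearizedPoly p a).eval t = linearizedHom p a t := by
  simp [linearizedPoly, linearizedHom_apply, eval_finsetSum]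

variable [Field K] [Fintype K] {p : ℕ}

theorem linearizedHom_injective [ExpChar K p] (hp : 1 < p) (hcard : Fintype.card K = p ^ m) :
    Function.Injective (linearizedHom (K := K) (m := m) p) := by
  intro a b hab
  have hpoly : linearizedPoly p a = linearizedPoly p b :=
    eq_of_natDegree_lt_card_of_eval_eq _ _ Function.injective_id
      (fun t => by simp only [id, eval_linearizedPoly, hab])
      (hcard ▸ max_lt (natDegree_linearizedPoly_lt hp a) (natDegree_linearizedPoly_lt hp b))
  funext j
  rw [← coeff_linearizedPoly_pow hp a j, hpoly, coeff_linearizedPoly_pow hp b j]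

theorem natCard_addMonoidHom_eq [Fact p.Prime] [CharP K p] (hcard : Fintype.card K = p ^ m) :
    Nat.card (K →+ K) = Nat.card (Fin m → K) := by
  let := ZMod.algebra K p
  have hrank : Module.finrank (ZMod p) K = m := by
    apply Nat.pow_right_injective (Fact.out : p.Prime).two_le
    simp only [← hcard, Module.card_eq_pow_finrank (K := ZMod p) (V := K), ZMod.card]
  let b := Module.finBasisOfFinrankEq (ZMod p) K hrank
  calc Nat.card (K →+ K) = Nat.card (K →ₗ[ZMod p] K) :=
        Nat.card_congr (AddMonoidHom.toZModLinearMapEquiv p).toEquiv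
    _ = Nat.card (Fin m → K) := (Nat.card_congr (b.constr ℕ).toEquiv).symm

theorem linearizedHom_bijective [Fact p.Prime] [CharP K p] (hcard : Fintype.card K = p ^ m) :
    Function.Bijective (linearizedHom (K := K) (m := m) p) :=
  have : Finite (K →+ K) := Finite.of_injective _ DFunLike.coe_injective
  (linearizedHom_injective (Fact.out : p.Prime).one_lt hcard).bijective_of_nat_card_le
    (natCard_addMonoidHom_eq hcard).le

theorem exists_eq_sum_linearizedHom [Fact p.Prime] [CharP K p] (hcard : Fintype.card K = p ^ m)
    {ι : Type*} [Fintype ι] [DecidableEq ι] (g : (ι → K) →+ K) :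
    ∃ a : ι → Fin m → K, ∀ x, g x = ∑ i, linearizedHom p (a i) (x i) := by
  choose a ha using fun i =>
    (linearizedHom_bijective hcard).2 (g.comp (AddMonoidHom.single (fun _ => K) i))
  have hg : g = ∑ i, (linearizedHom p (a i)).comp (Pi.evalAddMonoidHom _ i) :=
    AddMonoidHom.functions_ext K _ _ fun i t => by simp [Pi.single_apply, apply_ite, ha]
  exact ⟨a, fun x => by simp [hg]⟩

end Linearized

theorem affine_iff_additive_polynomial_general {K : Type*} [Field K] [Fintype K]
    (p m : ℕ) (hp : p.Prime) (hcard : Fintype.card K = p ^ m)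
    (n : ℕ) (f : (Fin n → K) → K) :
    (∀ x y : Fin n → K, f x + f y = f (x + y) + f 0) ↔
      ∃ (a0 : K) (a : Fin n → Fin m → K),
        ∀ x : Fin n → K,
          f x = a0 + ∑ i : Fin n, ∑ j : Fin m, a i j * x i ^ p ^ (j : ℕ) := by
  have : Fact p.Prime := ⟨hp⟩
  have : CharP K p := charP_of_card_eq_prime_pow hcard
  rw [affine_iff_exists_addMonoidHom]
  constructor
  · rintro ⟨c, g, hg⟩
    obtain ⟨a, ha⟩ := exists_eq_sum_linearizedHom hcard g
    exact ⟨c, a, fun x => by simp only [hg, ha, linearizedHom_apply]⟩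
  · rintro ⟨c, a, ha⟩
    exact ⟨c, ∑ i, (linearizedHom p (a i)).comp (Pi.evalAddMonoidHom _ i), fun x => by
      simp [ha, linearizedHom_apply]⟩

/-- A function on a finite field with `p^m` elements is affine with respect to the additive
group iff it is of the form `a₀ + Σᵢ Σⱼ aᵢⱼ · xᵢ^(p^j)` (`1 ≤ i ≤ n`, `0 ≤ j ≤ m-1`). -/
theorem affine_iff_additive_polynomial {K : Type*} [Field K] [Fintype K]
    (p m : ℕ) (hp : p.Prime) (hm : 1 ≤ m) (hcard : Fintype.card K = p ^ m)
    (n : ℕ) (f : (Fin n → K) → K) :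
    (∀ x y : Fin n → K, f x + f y = f (x + y) + f 0) ↔
      ∃ (a0 : K) (a : Fin n → Fin m → K),
        ∀ x : Fin n → K,
          f x = a0 + ∑ i : Fin n, ∑ j : Fin m, a i j * x i ^ p ^ (j : ℕ) :=
  affine_iff_additive_polynomial_general p m hp hcard n f
end
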